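/- arXiv:1710.07195 — 8 statements merged into one kernel-verified Lean document; each statement's English description precedes it below -/
import Mathlib

section
/- Let m, d > 0 and λ_k, λ_l > 0. Define h_k(t) = L^{-1}[1/(m s^2 + d s + λ_k)](t) and h_l(t) = L^{-1}[1/(m s^2 + d s + λ_l)](t), the impulse responses of the stable second-order systems. Then ∫_0^∞ h_k(t) h_l(t) dt = 2d / (m(λ_k − λ_l)^2 + 2(λ_k + λ_l) d^2). -/
open MeasureTheory Set Filter

lemma quad (m d l c μ x y z : ℝ) (hm : 0 < m) (hd : 0 < d) (hl : 0 < l) (hc0 : 0 < c)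
    (hcd : c ≤ d) (hcml : c*d ≤ m*l) (hμ : μ = c/(3*m))
    (heq : m*z + d*y + l*x = 0) :
    2*l*x*y + 2*m*y*z + c*(y*y + x*z) + μ*(l*x^2 + m*y^2 + c*(x*y)) ≤ 0 := by
  have key : (3*c*d - c^2)^2 ≤ 8*c*l*(6*d - 4*c)*m := by
    have h1 : (3*c*d - c^2)^2 ≤ 9*c^2*d^2 := by
      nlinarith [mul_nonneg (mul_nonneg (mul_nonneg hc0.le hc0.le) hc0.le) (by linarith : (0:ℝ) ≤ 6*d - c)]
    have h2 : 9*c^2*d^2 ≤ 9*(c*d)*(m*l) := by nlinarith [mul_pos hc0 hd]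
    have h3 : 16*(c*l)*(d*m) ≤ 8*c*l*(6*d - 4*c)*m := by
      nlinarith [mul_nonneg (mul_nonneg (mul_pos hc0 hl).le hm.le) (by linarith : (0:ℝ) ≤ d - c)]
    nlinarith [mul_pos (mul_pos hc0 hd) (mul_pos hm hl)]
  have key2 : 0 ≤ 2*c*l*x^2 + (3*c*d - c^2)*(x*y) + (6*d - 4*c)*m*y^2 := by
    nlinarith [sq_nonneg (4*c*l*x + (3*c*d - c^2)*y), mul_nonneg (sub_nonneg.2 key) (sq_nonneg y), mul_pos hc0 hl]
  have id1 : 3*m*(2*l*x*y + 2*m*y*z + c*(y*y + x*z)) + c*(l*x^2 + m*y^2 + c*(x*y))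
      = -(2*c*l*x^2 + (3*c*d - c^2)*(x*y) + (6*d - 4*c)*m*y^2)
        + (6*m*y + 3*c*x)*(m*z + d*y + l*x) := by ring
  have hAB : 3*m*(2*l*x*y + 2*m*y*z + c*(y*y + x*z)) + c*(l*x^2 + m*y^2 + c*(x*y)) ≤ 0 := by
    rw [id1, heq]; linarith
  have h3m : (0:ℝ) < 3*m := by linarith
  have hrw : 2*l*x*y + 2*m*y*z + c*(y*y + x*z) + μ*(l*x^2 + m*y^2 + c*(x*y))
      = (3*m*(2*l*x*y + 2*m*y*z + c*(y*y + x*z)) + c*(l*x^2 + m*y^2 + c*(x*y)))/(3*m) := by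
    rw [hμ]; field_simp
  rw [hrw]
  exact div_nonpos_of_nonpos_of_nonneg hAB h3m.le

lemma decay (m d l : ℝ) (hm : 0 < m) (hd : 0 < d) (hl : 0 < l)
    (h : ℝ → ℝ) (hs : ContDiff ℝ (⊤ : ℕ∞) h)
    (hode : ∀ t, m * deriv (deriv h) t + d * deriv h t + l * h t = 0) :
    ∃ C μ : ℝ, 0 ≤ C ∧ 0 < μ ∧ ∀ t, 0 ≤ t →
      (h t)^2 ≤ C * Real.exp (-μ * t) ∧ (deriv h t)^2 ≤ C * Real.exp (-μ * t) := by
  have hdiff : Differentiable ℝ h := hs.differentiable (by simp)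
  have hs' : ContDiff ℝ (((⊤ : ℕ∞)) : WithTop ℕ∞) h := hs.of_le (mod_cast le_top)
  have hs1 : ContDiff ℝ (((⊤ : ℕ∞)) : WithTop ℕ∞) (deriv h) := (contDiff_infty_iff_deriv.mp hs').2
  have hdiff1 : Differentiable ℝ (deriv h) := hs1.differentiable (by simp)
  set c : ℝ := min d (m*l/d) with hc
  have hc0 : 0 < c := lt_min hd (div_pos (mul_pos hm hl) hd)
  have hcd : c ≤ d := min_le_left _ _
  have hcml : c * d ≤ m * l := by
    have := min_le_right d (m*l/d)
    calc c * d ≤ (m*l/d) * d := by nlinarith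
    _ = m * l := by field_simp
  set μ : ℝ := c / (3*m) with hμ
  have hμ0 : 0 < μ := div_pos hc0 (by linarith)
  set V : ℝ → ℝ := fun t => l * h t^2 + m * (deriv h t)^2 + c * (h t * deriv h t) with hV
  set W : ℝ → ℝ := fun t => V t * Real.exp (μ * t) with hW
  have Hh : ∀ t, HasDerivAt h (deriv h t) t := fun t => (hdiff t).hasDerivAt
  have Hh' : ∀ t, HasDerivAt (deriv h) (deriv (deriv h) t) t := fun t => (hdiff1 t).hasDerivAt
  have HV : ∀ t : ℝ, HasDerivAt V (2*l*(h t)*(deriv h t) + 2*m*(deriv h t)*(deriv (deriv h) t)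
      + c*((deriv h t)*(deriv h t) + (h t)*(deriv (deriv h) t))) t := by
    intro t
    have h1 := ((((Hh t).pow 2).const_mul l).add (((Hh' t).pow 2).const_mul m)).add
      (((Hh t).mul (Hh' t)).const_mul c)
    refine h1.congr_deriv ?_
    push_cast; ring
  have HW : ∀ t : ℝ, HasDerivAt W ((2*l*(h t)*(deriv h t) + 2*m*(deriv h t)*(deriv (deriv h) t)
      + c*((deriv h t)*(deriv h t) + (h t)*(deriv (deriv h) t)) + μ * V t) * Real.exp (μ * t)) t := by
    intro t
    have he : HasDerivAt (fun t : ℝ => Real.exp (μ * t)) (Real.exp (μ * t) * μ) t := by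
      simpa using ((hasDerivAt_id t).const_mul μ).exp
    have := (HV t).mul he
    refine this.congr_deriv ?_; ring
  have hWanti : Antitone W := by
    apply antitone_of_deriv_nonpos (fun t => (HW t).differentiableAt)
    intro t
    rw [(HW t).deriv]
    have hq := quad m d l c μ (h t) (deriv h t) (deriv (deriv h) t) hm hd hl hc0 hcd hcml hμ
      (by linarith [hode t])
    have : V t = l * h t^2 + m * (deriv h t)^2 + c * (h t * deriv h t) := rfl
    have hexp := Real.exp_pos (μ * t)
    apply mul_nonpos_of_nonpos_of_nonneg _ hexp.le
    rw [this]; nlinarith [hq]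
  have hposdef : ∀ t : ℝ, l * h t^2 ≤ 2 * V t ∧ m * (deriv h t)^2 ≤ 2 * V t := by
    intro t
    have hc2 : c^2 ≤ m*l := by nlinarith
    have hVt : V t = l * h t^2 + m * (deriv h t)^2 + c * (h t * deriv h t) := rfl
    rw [hVt]
    constructor <;>
      nlinarith [sq_nonneg (c * h t + m * deriv h t), mul_nonneg (sub_nonneg.2 hc2) (sq_nonneg (h t)),
        mul_nonneg (sub_nonneg.2 hc2) (sq_nonneg (deriv h t)), sq_nonneg (h t), sq_nonneg (deriv h t),
        mul_pos hm hl, hm, hl, sq_nonneg (m * deriv h t), sq_nonneg (h t + deriv h t)]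
  have hV0 : 0 ≤ V 0 := by nlinarith [(hposdef 0).1, mul_nonneg hl.le (sq_nonneg (h 0))]
  refine ⟨2 * V 0 * (1/l + 1/m), μ, ?_, hμ0, ?_⟩
  · have : 0 < 1/l + 1/m := by positivity
    positivity
  · intro t ht
    have hWt : W t ≤ W 0 := hWanti ht
    have hVt : V t * Real.exp (μ * t) ≤ V 0 := by
      simpa [hW] using hWt
    have hVle : V t ≤ V 0 * Real.exp (-μ * t) := by
      have hep : 0 < Real.exp (μ * t) := Real.exp_pos _
      have h2 : V t ≤ V 0 / Real.exp (μ * t) := (le_div_iff₀ hep).2 hVt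
      rw [neg_mul, Real.exp_neg, ← div_eq_mul_inv]; exact h2
    have hexp0 : (0:ℝ) ≤ Real.exp (-μ * t) := (Real.exp_pos _).le
    have hVexp : (0:ℝ) ≤ V 0 * Real.exp (-μ * t) := mul_nonneg hV0 hexp0
    constructor
    · have h1 := (hposdef t).1
      have hx : h t ^ 2 ≤ 2 * V 0 * Real.exp (-μ * t) * (1/l) := by
        rw [mul_one_div, le_div_iff₀ hl]; nlinarith
      have hy : (0:ℝ) ≤ 2 * V 0 * Real.exp (-μ * t) * (1/m) := by positivity
      linarith
    · have h1 := (hposdef t).2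
      have hx : deriv h t ^ 2 ≤ 2 * V 0 * Real.exp (-μ * t) * (1/m) := by
        rw [mul_one_div, le_div_iff₀ hm]; nlinarith
      have hy : (0:ℝ) ≤ 2 * V 0 * Real.exp (-μ * t) * (1/l) := by positivity
      linarith

lemma alg (m d lk ll D al be ga de a a' a'' b b' b'' : ℝ)
    (hm : m ≠ 0) (hd : d ≠ 0) (hD0 : D ≠ 0)
    (hDdef : D = m*(lk-ll)^2 + 2*(lk+ll)*d^2)
    (hde : de = -2*d*m^2/D)
    (hbe : be = de*d/m - de*(lk-ll)/(2*d))
    (hga : ga = de*d/m + de*(lk-ll)/(2*d))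
    (hal : al = (be*d + de*lk)/m)
    (e1 : m*a'' + d*a' + lk*a = 0)
    (e2 : m*b'' + d*b' + ll*b = 0) :
    al*(a'*b + a*b') + be*(a'*b' + a*b'') + ga*(a''*b + a'*b') + de*(a''*b' + a'*b'') = a*b := by
  have ha : a'' = -(d*a' + lk*a)/m := by field_simp; linarith
  have hb : b'' = -(d*b' + ll*b)/m := by field_simp; linarith
  subst hde hbe hga hal ha hb
  field_simp
  subst hDdef
  ring

lemma tend0 (C μ : ℝ) (hμ : 0 < μ) (f : ℝ → ℝ)
    (hb : ∀ t, 0 ≤ t → f t^2 ≤ C * Real.exp (-μ*t)) : Tendsto f atTop (nhds 0) := by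
  refine squeeze_zero_norm' (a := fun t => Real.sqrt (C * Real.exp (-μ*t))) ?_ ?_
  · filter_upwards [eventually_ge_atTop (0:ℝ)] with t ht
    calc ‖f t‖ = Real.sqrt (f t^2) := by rw [Real.sqrt_sq_eq_abs]; rfl
    _ ≤ Real.sqrt (C * Real.exp (-μ*t)) := Real.sqrt_le_sqrt (hb t ht)
  · have h1 : Tendsto (fun t : ℝ => C * Real.exp (-μ*t)) atTop (nhds 0) := by
      have h2 : Tendsto (fun t : ℝ => μ * t) atTop atTop :=
        Tendsto.const_mul_atTop hμ tendsto_id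
      have h4 : Tendsto (fun t : ℝ => Real.exp (-μ*t)) atTop (nhds 0) := by
        have h3 := Real.tendsto_exp_neg_atTop_nhds_zero.comp h2
        have hfe : (fun t : ℝ => Real.exp (-μ*t)) = (fun x : ℝ => Real.exp (-x)) ∘ (fun t : ℝ => μ*t) := by
          funext t; simp [Function.comp, neg_mul]
        rw [hfe]; exact h3
      simpa using h4.const_mul C
    have := (Real.continuous_sqrt.tendsto 0).comp h1
    simpa [Function.comp_def] using this

/-- Inner product of the impulse responses of two stable second-order swing systems. -/
theorem stmt0 (m d lk ll : ℝ) (hm : 0 < m) (hd : 0 < d) (hlk : 0 < lk) (hll : 0 < ll)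
    (hk hl : ℝ → ℝ) (hksmooth : ContDiff ℝ (⊤ : ℕ∞) hk) (hlsmooth : ContDiff ℝ (⊤ : ℕ∞) hl)
    (hkode : ∀ t, m * deriv (deriv hk) t + d * deriv hk t + lk * hk t = 0)
    (hlode : ∀ t, m * deriv (deriv hl) t + d * deriv hl t + ll * hl t = 0)
    (hk0 : hk 0 = 0) (hk0' : deriv hk 0 = 1 / m)
    (hl0 : hl 0 = 0) (hl0' : deriv hl 0 = 1 / m) :
    ∫ t in Ioi (0 : ℝ), hk t * hl t
      = 2 * d / (m * (lk - ll) ^ 2 + 2 * (lk + ll) * d ^ 2) := by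
  obtain ⟨Ck, μk, hCk, hμk, hbk⟩ := decay m d lk hm hd hlk hk hksmooth hkode
  obtain ⟨Cl, μl, hCl, hμl, hbl⟩ := decay m d ll hm hd hll hl hlsmooth hlode
  have hDk : Differentiable ℝ hk := hksmooth.differentiable (by simp)
  have hDl : Differentiable ℝ hl := hlsmooth.differentiable (by simp)
  have hsk1 : ContDiff ℝ (((⊤:ℕ∞)) : WithTop ℕ∞) (deriv hk) :=
    (contDiff_infty_iff_deriv.mp (hksmooth.of_le (mod_cast le_top))).2
  have hsl1 : ContDiff ℝ (((⊤:ℕ∞)) : WithTop ℕ∞) (deriv hl) :=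
    (contDiff_infty_iff_deriv.mp (hlsmooth.of_le (mod_cast le_top))).2
  have hDk1 : Differentiable ℝ (deriv hk) := hsk1.differentiable (by simp)
  have hDl1 : Differentiable ℝ (deriv hl) := hsl1.differentiable (by simp)
  set D : ℝ := m*(lk-ll)^2 + 2*(lk+ll)*d^2 with hDdef
  have hD0 : 0 < D := by
    have h1 : 0 ≤ m*(lk-ll)^2 := mul_nonneg hm.le (sq_nonneg _)
    nlinarith [mul_pos (show (0:ℝ) < lk + ll by linarith) (mul_pos hd hd)]
  set de : ℝ := -2*d*m^2/D with hde
  set be : ℝ := de*d/m - de*(lk-ll)/(2*d) with hbe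
  set ga : ℝ := de*d/m + de*(lk-ll)/(2*d) with hga
  set al : ℝ := (be*d + de*lk)/m with hal
  set F : ℝ → ℝ := fun t => al*(hk t*hl t) + be*(hk t*deriv hl t) + ga*(deriv hk t*hl t)
    + de*(deriv hk t*deriv hl t) with hF
  have Hk : ∀ t, HasDerivAt hk (deriv hk t) t := fun t => (hDk t).hasDerivAt
  have Hl : ∀ t, HasDerivAt hl (deriv hl t) t := fun t => (hDl t).hasDerivAt
  have Hk' : ∀ t, HasDerivAt (deriv hk) (deriv (deriv hk) t) t := fun t => (hDk1 t).hasDerivAt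
  have Hl' : ∀ t, HasDerivAt (deriv hl) (deriv (deriv hl) t) t := fun t => (hDl1 t).hasDerivAt
  have HF : ∀ t, HasDerivAt F (hk t * hl t) t := by
    intro t
    have H := (((((Hk t).mul (Hl t)).const_mul al).add (((Hk t).mul (Hl' t)).const_mul be)).add
      (((Hk' t).mul (Hl t)).const_mul ga)).add (((Hk' t).mul (Hl' t)).const_mul de)
    refine H.congr_deriv (Eq.symm ?_)
    exact (alg m d lk ll D al be ga de (hk t) (deriv hk t) (deriv (deriv hk) t)
      (hl t) (deriv hl t) (deriv (deriv hl) t) hm.ne' hd.ne' hD0.ne' hDdef hde hbe hga hal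
      (hkode t) (hlode t)).symm
  have hcont : Continuous (fun t => hk t * hl t) := hksmooth.continuous.mul hlsmooth.continuous
  set s : ℝ := (μk + μl)/2 with hs
  have hs0 : 0 < s := by positivity
  have hbound : ∀ t ∈ Ioi (0:ℝ), ‖hk t * hl t‖ ≤ Real.sqrt (Ck*Cl) * Real.exp (-s*t) := by
    intro t ht
    have h1 := (hbk t (le_of_lt ht)).1
    have h2 := (hbl t (le_of_lt ht)).1
    have hexp : Real.exp (-μk*t) * Real.exp (-μl*t) = Real.exp (-(μk+μl)*t) := by
      rw [← Real.exp_add]; ring_nf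
    have hsq : (hk t * hl t)^2 ≤ (Ck*Cl) * Real.exp (-(μk+μl)*t) := by
      have h3 : hk t^2 * hl t^2 ≤ (Ck * Real.exp (-μk*t)) * (Cl * Real.exp (-μl*t)) :=
        mul_le_mul h1 h2 (sq_nonneg _) (le_trans (sq_nonneg _) h1)
      calc (hk t*hl t)^2 = hk t^2 * hl t^2 := by ring
      _ ≤ (Ck * Real.exp (-μk*t)) * (Cl * Real.exp (-μl*t)) := h3
      _ = (Ck*Cl) * (Real.exp (-μk*t) * Real.exp (-μl*t)) := by ring
      _ = (Ck*Cl) * Real.exp (-(μk+μl)*t) := by rw [hexp]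
    calc ‖hk t * hl t‖ = Real.sqrt ((hk t*hl t)^2) := by rw [Real.sqrt_sq_eq_abs]; rfl
    _ ≤ Real.sqrt ((Ck*Cl) * Real.exp (-(μk+μl)*t)) := Real.sqrt_le_sqrt hsq
    _ = Real.sqrt (Ck*Cl) * Real.sqrt (Real.exp (-(μk+μl)*t)) :=
        Real.sqrt_mul (mul_nonneg hCk hCl) _
    _ = Real.sqrt (Ck*Cl) * Real.exp (-s*t) := by
        rw [← Real.exp_half]; congr 1; rw [hs]; ring
  have hg : IntegrableOn (fun t => Real.sqrt (Ck*Cl) * Real.exp (-s*t)) (Ioi (0:ℝ)) :=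
    (exp_neg_integrableOn_Ioi 0 hs0).const_mul _
  have hInt : IntegrableOn (fun t => hk t * hl t) (Ioi (0:ℝ)) := by
    apply Integrable.mono' hg hcont.aestronglyMeasurable
    rw [ae_restrict_iff' measurableSet_Ioi]
    exact ae_of_all _ hbound
  have hlim1 : Tendsto (fun b => ∫ t in (0:ℝ)..b, hk t * hl t) atTop
      (nhds (∫ t in Ioi (0:ℝ), hk t * hl t)) :=
    intervalIntegral_tendsto_integral_Ioi 0 hInt tendsto_id
  have heqI : ∀ b : ℝ, ∫ t in (0:ℝ)..b, hk t * hl t = F b - F 0 := fun b =>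
    intervalIntegral.integral_eq_sub_of_hasDerivAt (fun x _ => HF x) (hcont.intervalIntegrable _ _)
  have tk := tend0 Ck μk hμk hk (fun t ht => (hbk t ht).1)
  have tk' := tend0 Ck μk hμk (deriv hk) (fun t ht => (hbk t ht).2)
  have tl := tend0 Cl μl hμl hl (fun t ht => (hbl t ht).1)
  have tl' := tend0 Cl μl hμl (deriv hl) (fun t ht => (hbl t ht).2)
  have hFlim : Tendsto F atTop (nhds 0) := by
    have h := ((((tk.mul tl).const_mul al).add ((tk.mul tl').const_mul be)).add
      (((tk'.mul tl).const_mul ga))).add ((tk'.mul tl').const_mul de)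
    simpa using h
  have hlim2 : Tendsto (fun b => F b - F 0) atTop (nhds (0 - F 0)) :=
    hFlim.sub tendsto_const_nhds
  have hkey : ∫ t in Ioi (0:ℝ), hk t * hl t = 0 - F 0 := by
    refine tendsto_nhds_unique ?_ hlim2
    simpa only [heqI] using hlim1
  rw [hkey]
  have hF0 : F 0 = de * (1/m * (1/m)) := by
    simp [hF, hk0, hl0, hk0', hl0']
  rw [hF0, hde]
  field_simp
  ring
end

section
/- Let m, d > 0 and λ_k > 0, and let h_k(t) be the impulse response of h_k(s) = 1/(m s^2 + d s + λ_k). Then ∫_0^∞ h_k(t)^2 dt = 1/(2 d λ_k). In particular this L2 norm is independent of the inertia m. -/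
open MeasureTheory Set Filter Topology

/-- L2 norm squared of the impulse response of a stable second-order swing system:
it equals `1/(2 d λ)` and is independent of the inertia `m`. -/
theorem stmt1 (m d lk : ℝ) (hm : 0 < m) (hd : 0 < d) (hlk : 0 < lk)
    (hk : ℝ → ℝ) (hksmooth : ContDiff ℝ (⊤ : ℕ∞) hk)
    (hkode : ∀ t, m * deriv (deriv hk) t + d * deriv hk t + lk * hk t = 0)
    (hk0 : hk 0 = 0) (hk0' : deriv hk 0 = 1 / m) :
    ∫ t in Ioi (0 : ℝ), (hk t) ^ 2 = 1 / (2 * d * lk) := by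
  have hdh : Differentiable ℝ hk := hksmooth.differentiable (by simp)
  have hdh' : Differentiable ℝ (deriv hk) :=
    (contDiff_infty_iff_deriv.mp
      (contDiff_infty_iff_deriv.mp (hksmooth.of_le (mod_cast le_top))).2).1
  set h' := deriv hk with hh'def
  set h'' := deriv (deriv hk) with hh''def
  have hD : ∀ t : ℝ, HasDerivAt hk (h' t) t := fun t => (hdh t).hasDerivAt
  have hD' : ∀ t : ℝ, HasDerivAt h' (h'' t) t := fun t => (hdh' t).hasDerivAt
  set P : ℝ → ℝ := fun t => (d * hk t + m * h' t) ^ 2 + m * lk * (hk t) ^ 2 with hPdef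
  set Q : ℝ → ℝ := fun t => lk * (hk t) ^ 2 + m * (h' t) ^ 2 with hQdef
  set R : ℝ → ℝ := fun t => P t + lk * Q t with hRdef
  have hP : ∀ t : ℝ, HasDerivAt P (-(2 * d * lk * (hk t) ^ 2)) t := by
    intro t
    have h1 : HasDerivAt P
        (2 * (d * hk t + m * h' t) ^ 1 * (d * h' t + m * h'' t)
          + m * lk * (2 * (hk t) ^ 1 * h' t)) t := by
      exact ((((hD t).const_mul d).add ((hD' t).const_mul m)).pow 2).add
        (((hD t).pow 2).const_mul (m * lk))
    have h2 : 2 * (d * hk t + m * h' t) ^ 1 * (d * h' t + m * h'' t)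
          + m * lk * (2 * (hk t) ^ 1 * h' t) = -(2 * d * lk * (hk t) ^ 2) := by
      linear_combination (2 * (d * hk t + m * h' t)) * hkode t
    exact h2 ▸ h1
  have hQ' : ∀ t : ℝ, HasDerivAt Q (-(2 * d * (h' t) ^ 2)) t := by
    intro t
    have h1 : HasDerivAt Q
        (lk * (2 * (hk t) ^ 1 * h' t) + m * (2 * (h' t) ^ 1 * h'' t)) t := by
      exact (((hD t).pow 2).const_mul lk).add (((hD' t).pow 2).const_mul m)
    have h2 : lk * (2 * (hk t) ^ 1 * h' t) + m * (2 * (h' t) ^ 1 * h'' t)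
        = -(2 * d * (h' t) ^ 2) := by
      linear_combination (2 * h' t) * hkode t
    exact h2 ▸ h1
  have hR : ∀ t : ℝ, HasDerivAt R (-(2 * d * lk * ((hk t) ^ 2 + (h' t) ^ 2))) t := by
    intro t
    have := (hP t).add ((hQ' t).const_mul lk)
    exact this.congr_deriv (by ring)
  have hPnn : ∀ t, 0 ≤ P t := by
    intro t
    simp only [hPdef]
    positivity
  have hQnn : ∀ t, 0 ≤ Q t := by
    intro t
    simp only [hQdef]
    positivity
  have hRnn : ∀ t, 0 ≤ R t := fun t =>
    add_nonneg (hPnn t) (mul_nonneg hlk.le (hQnn t))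
  -- R is antitone
  have hRanti : Antitone R := by
    apply antitone_of_deriv_nonpos
    · exact fun t => (hR t).differentiableAt
    · intro t
      rw [(hR t).deriv]
      exact neg_nonpos.mpr (by positivity)
  have hbdd : BddBelow (Set.range R) := ⟨0, fun x ⟨t, ht⟩ => ht ▸ hRnn t⟩
  set L : ℝ := ⨅ t, R t with hLdef
  have hRtend : Tendsto R atTop (𝓝 L) := tendsto_atTop_ciInf hRanti hbdd
  have hLnn : 0 ≤ L := le_ciInf hRnn
  have hRgeL : ∀ t, L ≤ R t := fun t => ciInf_le hbdd t
  -- the function g = -R/(2 d lk) has derivative hk^2 + h'^2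
  have hdlk : (0:ℝ) < 2 * d * lk := by positivity
  have hgderiv : ∀ t ∈ Ici (0:ℝ),
      HasDerivAt (fun t => -(R t / (2 * d * lk))) ((hk t) ^ 2 + (h' t) ^ 2) t := by
    intro t _
    have := ((hR t).div_const (2 * d * lk)).neg
    exact this.congr_deriv (by field_simp)
  have hgtend : Tendsto (fun t => -(R t / (2 * d * lk))) atTop (𝓝 (-(L / (2 * d * lk)))) :=
    (hRtend.div_const _).neg
  have hnonneg : ∀ x ∈ Ioi (0:ℝ), 0 ≤ (hk x) ^ 2 + (h' x) ^ 2 := fun x _ => by positivity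
  have hint : IntegrableOn (fun t => (hk t) ^ 2 + (h' t) ^ 2) (Ioi (0:ℝ)) :=
    integrableOn_Ioi_deriv_of_nonneg' hgderiv hnonneg hgtend
  -- L must be 0
  have hL0 : L = 0 := by
    by_contra hne
    have hLpos : 0 < L := lt_of_le_of_ne hLnn (Ne.symm hne)
    set C : ℝ := 2 * d ^ 2 + m * lk + 2 * m ^ 2 + lk * lk + lk * m with hCdef
    have hCpos : 0 < C := by positivity
    have hub : ∀ t, R t ≤ C * ((hk t) ^ 2 + (h' t) ^ 2) := by
      intro t
      simp only [hRdef, hPdef, hQdef, hCdef]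
      nlinarith [sq_nonneg (d * hk t - m * h' t), sq_nonneg (d * hk t),
        sq_nonneg (d * h' t), sq_nonneg (m * hk t), sq_nonneg (m * h' t),
        sq_nonneg (lk * hk t), sq_nonneg (lk * h' t),
        mul_nonneg (mul_nonneg hlk.le hm.le) (sq_nonneg (hk t)),
        mul_nonneg (mul_nonneg hlk.le hm.le) (sq_nonneg (h' t))]
    have hlow : ∀ t, L / C ≤ (hk t) ^ 2 + (h' t) ^ 2 := by
      intro t
      rw [div_le_iff₀ hCpos]
      have := hub t; have := hRgeL t
      nlinarith
    have hconst : IntegrableOn (fun _ : ℝ => L / C) (Ioi (0:ℝ)) := by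
      apply Integrable.mono hint (aestronglyMeasurable_const)
      filter_upwards with x
      rw [Real.norm_eq_abs, Real.norm_eq_abs, abs_of_nonneg (by positivity),
        abs_of_nonneg (by positivity : (0:ℝ) ≤ (hk x) ^ 2 + (h' x) ^ 2)]
      exact hlow x
    rw [integrableOn_const_iff] at hconst
    rcases hconst with h | h
    · exact absurd h (by simp [hLpos.ne', hCpos.ne'])
    · simp [Real.volume_Ioi] at h
  -- hence R → 0, so P → 0
  rw [hL0] at hRtend hgtend
  have hPtend : Tendsto P atTop (𝓝 0) := by
    apply squeeze_zero hPnn _ hRtend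
    intro t
    simp only [hRdef]
    linarith [mul_nonneg hlk.le (hQnn t)]
  -- now integrate hk^2 using F = P/(2 d lk)
  have hFderiv : ∀ t ∈ Ici (0:ℝ),
      HasDerivAt (fun t => -(P t / (2 * d * lk))) ((hk t) ^ 2) t := by
    intro t _
    have := ((hP t).div_const (2 * d * lk)).neg
    exact this.congr_deriv (by field_simp)
  have hFtend : Tendsto (fun t => -(P t / (2 * d * lk))) atTop (𝓝 (-(0 / (2 * d * lk)))) :=
    (hPtend.div_const _).neg
  have hsq : ∀ x ∈ Ioi (0:ℝ), 0 ≤ (hk x) ^ 2 := fun x _ => sq_nonneg _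
  have := integral_Ioi_of_hasDerivAt_of_nonneg' hFderiv hsq hFtend
  rw [this]
  have hP0 : P 0 = 1 := by
    simp only [hPdef, hk0, hk0']
    field_simp
    ring
  rw [hP0]
  ring
end

section
/- Let m, d, τ, r^{-1} > 0. Then the cubic polynomial mτ s^3 + (m + dτ)s^2 + (d + r^{-1} + λτ)s + λ has all roots with strictly negative real part for every λ > 0. -/
/-! At a root `s = x + iy` with `x ≥ 0`, a real root is impossible since all coefficients are
positive. For `y ≠ 0` the imaginary part of the equation determines `a₃ y²`, and eliminating `y²`
from the real part leaves `a₃ a₀ - a₂ a₁` equal to a polynomial in `x` with nonnegative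
coefficients, contradicting the Routh–Hurwitz inequality `a₃ a₀ < a₂ a₁`. -/

namespace Complex

lemma cubic_eq_zero_re_im {a₃ a₂ a₁ a₀ : ℝ} {s : ℂ}
    (hs : (a₃ : ℂ) * s ^ 3 + (a₂ : ℂ) * s ^ 2 + (a₁ : ℂ) * s + (a₀ : ℂ) = 0) :
    a₃ * (s.re ^ 3 - 3 * s.re * s.im ^ 2) + a₂ * (s.re ^ 2 - s.im ^ 2) + a₁ * s.re + a₀ = 0 ∧
      s.im * (a₃ * (3 * s.re ^ 2 - s.im ^ 2) + 2 * a₂ * s.re + a₁) = 0 := by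
  have h_re := congrArg re hs
  have h_im := congrArg im hs
  simp only [add_re, add_im, mul_re, mul_im, pow_succ, pow_zero, one_mul, ofReal_re, ofReal_im,
    zero_re, zero_im, zero_mul, sub_zero] at h_re h_im
  constructor
  · linear_combination h_re
  · linear_combination h_im

theorem re_neg_of_cubic_eq_zero {a₃ a₂ a₁ a₀ : ℝ} (h₃ : 0 < a₃) (h₂ : 0 < a₂) (h₀ : 0 < a₀)
    (hRH : a₃ * a₀ < a₂ * a₁) {s : ℂ}
    (hs : (a₃ : ℂ) * s ^ 3 + (a₂ : ℂ) * s ^ 2 + (a₁ : ℂ) * s + (a₀ : ℂ) = 0) : s.re < 0 := by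
  obtain ⟨h_re, h_im⟩ := cubic_eq_zero_re_im hs
  set x := s.re
  set y := s.im
  have h₁ : 0 < a₁ := pos_of_mul_pos_right ((mul_pos h₃ h₀).trans hRH) h₂.le
  by_contra! hx
  rcases eq_or_ne y 0 with hy | hy
  · rw [hy] at h_re
    have : 0 < a₃ * x ^ 3 + a₂ * x ^ 2 + a₁ * x + a₀ := by positivity
    linarith
  · have h_y_sq : a₃ * y ^ 2 = 3 * a₃ * x ^ 2 + 2 * a₂ * x + a₁ := by
      linear_combination -(mul_eq_zero.mp h_im).resolve_left hy
    have h_elim : a₃ * a₀ - a₂ * a₁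
        = 8 * a₃ ^ 2 * x ^ 3 + 8 * a₃ * a₂ * x ^ 2 + 2 * (a₃ * a₁ + a₂ ^ 2) * x := by
      linear_combination a₃ * h_re + (3 * a₃ * x + a₂) * h_y_sq
    have : 0 ≤ 8 * a₃ ^ 2 * x ^ 3 + 8 * a₃ * a₂ * x ^ 2 + 2 * (a₃ * a₁ + a₂ ^ 2) * x := by
      positivity
    linarith

end Complex

/-- Hurwitz stability of the closed-loop cubic of the turbine-generator model:
all roots of `mτ s³ + (m + dτ)s² + (d + r⁻¹ + λτ)s + λ` have negative real part
for every `λ > 0`. -/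
theorem stmt6 (m d τ rinv : ℝ) (hm : 0 < m) (hd : 0 < d) (hτ : 0 < τ) (hr : 0 < rinv) :
    ∀ lam : ℝ, 0 < lam → ∀ s : ℂ,
      (↑(m * τ) : ℂ) * s ^ 3 + (↑(m + d * τ) : ℂ) * s ^ 2
          + (↑(d + rinv + lam * τ) : ℂ) * s + (↑lam : ℂ) = 0 → s.re < 0 := by
  intro lam hlam s hs
  have hRH : m * τ * lam < (m + d * τ) * (d + rinv + lam * τ) := by
    have : (m + d * τ) * (d + rinv + lam * τ) - m * τ * lam
        = m * (d + rinv) + d * τ * (d + rinv) + d * lam * τ ^ 2 := by ring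
    have : 0 < m * (d + rinv) + d * τ * (d + rinv) + d * lam * τ ^ 2 := by positivity
    linarith
  exact Complex.re_neg_of_cubic_eq_zero (by positivity) (by positivity) hlam hRH hs
end

section
/- Let m, d, τ, r^{-1}, λ > 0 and let h(t) be the impulse response of h(s) = (τs + 1)/(mτ s^3 + (m + dτ)s^2 + (d + r^{-1} + λτ)s + λ). Then ∫_0^∞ h(t)^2 dt = (m + τ(λτ + d)) / (2λ[m(r^{-1} + d) + τ d(r^{-1} + λτ + d)]). -/
open MeasureTheory Set Filter Topology

private def quadF (q11 q12 q13 q22 q23 q33 : ℝ) (x y z : ℝ → ℝ) : ℝ → ℝ :=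
  fun t => q11 * (x t)^2 + q12 * (x t * y t) + q13 * (x t * z t)
    + q22 * (y t)^2 + q23 * (y t * z t) + q33 * (z t)^2

private lemma quadF_hasDerivAt (q11 q12 q13 q22 q23 q33 : ℝ) {x y z : ℝ → ℝ} {w t : ℝ}
    (hx : HasDerivAt x (y t) t) (hy : HasDerivAt y (z t) t) (hz : HasDerivAt z w t) :
    HasDerivAt (quadF q11 q12 q13 q22 q23 q33 x y z)
      (q11 * (2 * x t * y t) + q12 * (y t * y t + x t * z t) + q13 * (y t * z t + x t * w)
        + q22 * (2 * y t * z t) + q23 * (z t * z t + y t * w) + q33 * (2 * z t * w)) t := by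
  have h1 : HasDerivAt (fun u => (x u)^2) (2 * x t * y t) t := (by simpa using hx.pow 2 : HasDerivAt (x ^ 2) (2 * x t * y t) t)
  have h4 : HasDerivAt (fun u => (y u)^2) (2 * y t * z t) t := (by simpa using hy.pow 2 : HasDerivAt (y ^ 2) (2 * y t * z t) t)
  have h6 : HasDerivAt (fun u => (z u)^2) (2 * z t * w) t := (by simpa using hz.pow 2 : HasDerivAt (z ^ 2) (2 * z t * w) t)
  exact (((((h1.const_mul q11).add ((hx.mul hy).const_mul q12)).add
    ((hx.mul hz).const_mul q13)).add (h4.const_mul q22)).add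
    ((hy.mul hz).const_mul q23)).add (h6.const_mul q33)

private lemma quadF_continuous (q11 q12 q13 q22 q23 q33 : ℝ) {x y z : ℝ → ℝ}
    (hx : Continuous x) (hy : Continuous y) (hz : Continuous z) :
    Continuous (quadF q11 q12 q13 q22 q23 q33 x y z) := by
  unfold quadF; fun_prop

private lemma ftc_all (F Fd : ℝ → ℝ) (hF : ∀ t, HasDerivAt F (Fd t) t) (hFd : Continuous Fd)
    (s t : ℝ) : ∫ u in s..t, Fd u = F t - F s :=
  intervalIntegral.integral_eq_sub_of_hasDerivAt (fun u _ => hF u) (hFd.intervalIntegrable s t)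

private lemma antitone_of_deriv (F Fd : ℝ → ℝ) (hF : ∀ t, HasDerivAt F (Fd t) t)
    (hFd : Continuous Fd) (hneg : ∀ t, Fd t ≤ 0) : Antitone F := by
  intro s t hst
  have h := ftc_all F Fd hF hFd s t
  have h2 : (∫ u in s..t, Fd u) ≤ 0 := by
    rw [← neg_nonneg, ← intervalIntegral.integral_neg]
    exact intervalIntegral.integral_nonneg hst (fun u _ => by linarith [hneg u])
  linarith

private lemma monotone_of_deriv (F Fd : ℝ → ℝ) (hF : ∀ t, HasDerivAt F (Fd t) t)
    (hFd : Continuous Fd) (hpos : ∀ t, 0 ≤ Fd t) : Monotone F := by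
  intro s t hst
  have h := ftc_all F Fd hF hFd s t
  have h2 : 0 ≤ (∫ u in s..t, Fd u) :=
    intervalIntegral.integral_nonneg hst (fun u _ => hpos u)
  linarith


-- quadratic form bound: |EE| ≤ CE * (X² + Y² + Z²)
private lemma quad_abs_bound (q11 q12 q13 q22 q23 q33 X Y Z : ℝ)
    (h11 : 0 ≤ q11) (h12 : 0 ≤ q12) (h13 : 0 ≤ q13) (h22 : 0 ≤ q22) (h23 : 0 ≤ q23)
    (h33 : 0 ≤ q33) :
    |q11 * X^2 + q12 * (X*Y) + q13 * (X*Z) + q22 * Y^2 + q23 * (Y*Z) + q33 * Z^2|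
      ≤ (q11 + q12 + q13 + q22 + q23 + q33) * (X^2 + Y^2 + Z^2) := by
  rw [abs_le]
  constructor
  · nlinarith [mul_nonneg h12 (sq_nonneg (X+Y)), mul_nonneg h13 (sq_nonneg (X+Z)),
      mul_nonneg h23 (sq_nonneg (Y+Z)), mul_nonneg h11 (sq_nonneg X),
      mul_nonneg h22 (sq_nonneg Y), mul_nonneg h33 (sq_nonneg Z),
      mul_nonneg h11 (sq_nonneg Y), mul_nonneg h11 (sq_nonneg Z),
      mul_nonneg h22 (sq_nonneg X), mul_nonneg h22 (sq_nonneg Z),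
      mul_nonneg h33 (sq_nonneg X), mul_nonneg h33 (sq_nonneg Y),
      mul_nonneg h12 (sq_nonneg Z), mul_nonneg h13 (sq_nonneg Y),
      mul_nonneg h23 (sq_nonneg X)]
  · nlinarith [mul_nonneg h12 (sq_nonneg (X-Y)), mul_nonneg h13 (sq_nonneg (X-Z)),
      mul_nonneg h23 (sq_nonneg (Y-Z)), mul_nonneg h11 (sq_nonneg X),
      mul_nonneg h22 (sq_nonneg Y), mul_nonneg h33 (sq_nonneg Z),
      mul_nonneg h11 (sq_nonneg Y), mul_nonneg h11 (sq_nonneg Z),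
      mul_nonneg h22 (sq_nonneg X), mul_nonneg h22 (sq_nonneg Z),
      mul_nonneg h33 (sq_nonneg X), mul_nonneg h33 (sq_nonneg Y),
      mul_nonneg h12 (sq_nonneg Z), mul_nonneg h13 (sq_nonneg Y),
      mul_nonneg h23 (sq_nonneg X)]

-- x-bound from decreasing EE and bounded y, z
private lemma xbound (a b c e E0 My Mz X Y Z : ℝ) (ha : 0 < a) (hb : 0 < b) (hc : 0 < c)
    (he : 0 < e) (hD : 0 < b*c - a*e)
    (h1 : (c*(b*c - a*e) + e*b^2) * X^2 + (2*b^2*c) * (X*Y) + (2*a*(b*c - a*e)) * (X*Z)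
        + (b^3 + a^2*e) * Y^2 + (2*a*b^2) * (Y*Z) + (a^2*b) * Z^2 ≤ E0)
    (h2 : Y^2 ≤ My) (h3 : Z^2 ≤ Mz) :
    (c*(b*c - a*e) + e*b^2)^2 * X^2
      ≤ 3*(c*(b*c - a*e) + e*b^2)*E0 + (6*b^4*c^2 + 3*a*b^4*e)*My
        + (6*a^2*(b*c - a*e)^2 + 3*a*b^4*e)*Mz := by
  have hK1 : (0:ℝ) < c*(b*c - a*e) + e*b^2 := by positivity
  nlinarith [mul_nonneg (by positivity : (0:ℝ) ≤ 3*(c*(b*c - a*e) + e*b^2))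
      (sub_nonneg.2 h1),
    sq_nonneg (2*((c*(b*c - a*e) + e*b^2)*X + b^2*c*Y + a*(b*c - a*e)*Z)
      + (b^2*c*Y + a*(b*c - a*e)*Z)),
    mul_nonneg (by positivity : (0:ℝ) ≤ 6*b^4*c^2) (sub_nonneg.2 h2),
    mul_nonneg (by positivity : (0:ℝ) ≤ 6*a^2*(b*c - a*e)^2) (sub_nonneg.2 h3),
    mul_nonneg (by positivity : (0:ℝ) ≤ 3*a*b^4*e) (sub_nonneg.2 h2),
    mul_nonneg (by positivity : (0:ℝ) ≤ 3*a*b^4*e) (sub_nonneg.2 h3),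
    mul_nonneg (by positivity : (0:ℝ) ≤ 3*a*b^4*e) (sq_nonneg (Y+Z)),
    mul_nonneg (by positivity : (0:ℝ) ≤ 3*(c*(b*c - a*e) + e*b^2)*(b^3 + a^2*e))
      (sq_nonneg Y),
    mul_nonneg (by positivity : (0:ℝ) ≤ 3*(c*(b*c - a*e) + e*b^2)*(a^2*b)) (sq_nonneg Z),
    sq_nonneg (b^2*c*Y - a*(b*c - a*e)*Z)]

set_option maxHeartbeats 2000000 in
private theorem aux_l2 (a b c e : ℝ) (ha : 0 < a) (hb : 0 < b) (hc : 0 < c) (he : 0 < e)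
    (hRH : a * e < b * c)
    (x : ℝ → ℝ) (hx : ContDiff ℝ (⊤ : ℕ∞) x)
    (hode : ∀ t, a * deriv (deriv (deriv x)) t + b * deriv (deriv x) t
        + c * deriv x t + e * x t = 0) :
    IntegrableOn (fun t => (x t)^2) (Ioi (0:ℝ)) ∧
    ∫ t in Ioi (0:ℝ), (x t)^2 =
      ((c*(b*c - a*e) + e*b^2)*(x 0)^2 + 2*b^2*c*(x 0)*(deriv x 0)
        + 2*a*(b*c - a*e)*(x 0)*(deriv (deriv x) 0) + (b^3 + a^2*e)*(deriv x 0)^2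
        + 2*a*b^2*(deriv x 0)*(deriv (deriv x) 0) + a^2*b*(deriv (deriv x) 0)^2)
      / (2*e*(b*c - a*e)) := by
  have hD : 0 < b*c - a*e := by linarith
  -- derivatives
  have hx0 : ContDiff ℝ ((⊤:ℕ∞):WithTop ℕ∞) x := hx.of_le (mod_cast le_top)
  have hdx : Differentiable ℝ x := hx0.differentiable (by simp)
  have hcd1 : ContDiff ℝ ((⊤:ℕ∞):WithTop ℕ∞) (deriv x) := (contDiff_infty_iff_deriv.mp hx0).2
  have hdy : Differentiable ℝ (deriv x) := hcd1.differentiable (by simp)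
  have hcd2 : ContDiff ℝ ((⊤:ℕ∞):WithTop ℕ∞) (deriv (deriv x)) := (contDiff_infty_iff_deriv.mp hcd1).2
  have hdz : Differentiable ℝ (deriv (deriv x)) := hcd2.differentiable (by simp)
  have hdzp : Continuous (deriv (deriv (deriv x))) :=
    ((contDiff_infty_iff_deriv.mp hcd2).2).continuous
  set y := deriv x with hydef
  set z := deriv y with hzdef
  have cx : Continuous x := hdx.continuous
  have cy : Continuous y := hdy.continuous
  have cz : Continuous z := hdz.continuous
  have Hx : ∀ t, HasDerivAt x (y t) t := fun t => (hdx t).hasDerivAt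
  have Hy : ∀ t, HasDerivAt y (z t) t := fun t => (hdy t).hasDerivAt
  have Hz : ∀ t, HasDerivAt z (deriv z t) t := fun t => (hdz t).hasDerivAt
  have hzp : ∀ t, deriv z t = -(b * z t + c * y t + e * x t)/a := by
    intro t
    have h := hode t
    field_simp
    linarith
  -- the three quadratic Lyapunov-type functions
  set EE := quadF (c*(b*c - a*e) + e*b^2) (2*b^2*c) (2*a*(b*c - a*e)) (b^3 + a^2*e)
      (2*a*b^2) (a^2*b) x y z with hEEdef
  set VV := quadF (e/2) ((a*e + b*c)/(2*b*e) * e) 0 ((b + (a*e + b*c)/(2*b*e)*c)/2) a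
      ((a*e + b*c)/(2*b*e)*a/2) x y z with hVVdef
  set WW := quadF 1 0 0 1 0 1 x y z with hWWdef
  have hWWeq : ∀ t, WW t = (x t)^2 + (y t)^2 + (z t)^2 := by
    intro t; rw [hWWdef]; unfold quadF; ring
  have cEE : Continuous EE := quadF_continuous _ _ _ _ _ _ cx cy cz
  have cVV : Continuous VV := quadF_continuous _ _ _ _ _ _ cx cy cz
  have cWW : Continuous WW := quadF_continuous _ _ _ _ _ _ cx cy cz
  -- derivatives of the Lyapunov functions
  have HEE : ∀ t, HasDerivAt EE (-(2*e*(b*c - a*e)) * (x t)^2) t := by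
    intro t
    have H := quadF_hasDerivAt (c*(b*c - a*e) + e*b^2) (2*b^2*c) (2*a*(b*c - a*e))
      (b^3 + a^2*e) (2*a*b^2) (a^2*b) (Hx t) (Hy t) (Hz t)
    rw [hEEdef]
    convert H using 1
    rw [hzp t]
    field_simp
    ring
  have HVV : ∀ t, HasDerivAt VV
      (-((b*c - a*e)/(2*b) * (y t)^2 + (b*c - a*e)/(2*e) * (z t)^2)) t := by
    intro t
    have H := quadF_hasDerivAt (e/2) ((a*e + b*c)/(2*b*e) * e) 0
      ((b + (a*e + b*c)/(2*b*e)*c)/2) a ((a*e + b*c)/(2*b*e)*a/2) (Hx t) (Hy t) (Hz t)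
    rw [hVVdef]
    convert H using 1
    rw [hzp t]
    field_simp
    ring
  have HWW : ∀ t, HasDerivAt WW
      (2*(x t * y t) + 2*(y t * z t) - 2*(z t)*(b * z t + c * y t + e * x t)/a) t := by
    intro t
    have H := quadF_hasDerivAt 1 0 0 1 0 1 (Hx t) (Hy t) (Hz t)
    rw [hWWdef]
    convert H using 1
    rw [hzp t]
    field_simp
    ring
  -- continuity of the derivative expressions
  have cEd : Continuous (fun t => -(2*e*(b*c - a*e)) * (x t)^2) := by fun_prop
  have cVd : Continuous
      (fun t => -((b*c - a*e)/(2*b) * (y t)^2 + (b*c - a*e)/(2*e) * (z t)^2)) := by fun_prop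
  have cWd : Continuous
      (fun t => 2*(x t * y t) + 2*(y t * z t) - 2*(z t)*(b * z t + c * y t + e * x t)/a) := by
    fun_prop
  -- expansions
  have hEEexp : ∀ s, EE s = (c*(b*c - a*e) + e*b^2) * (x s)^2 + (2*b^2*c) * (x s * y s)
      + (2*a*(b*c - a*e)) * (x s * z s) + (b^3 + a^2*e) * (y s)^2 + (2*a*b^2) * (y s * z s)
      + (a^2*b) * (z s)^2 := by
    intro s; rw [hEEdef]; rfl
  -- monotonicity
  have hEEanti : Antitone EE := antitone_of_deriv _ _ HEE cEd (fun t => by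
    nlinarith [sq_nonneg (x t), mul_nonneg (mul_pos he hD).le (sq_nonneg (x t))])
  have hVVanti : Antitone VV := antitone_of_deriv _ _ HVV cVd (fun t => by
    have h1 : 0 ≤ (b*c - a*e)/(2*b) * (y t)^2 :=
      mul_nonneg (div_nonneg hD.le (by linarith)) (sq_nonneg _)
    have h2 : 0 ≤ (b*c - a*e)/(2*e) * (z t)^2 :=
      mul_nonneg (div_nonneg hD.le (by linarith)) (sq_nonneg _)
    linarith)
  -- sum-of-squares decomposition of VV
  have hVsos : ∀ t, VV t = (e/2)*(x t + (a*e + b*c)/(2*b*e)*y t)^2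
      + ((a*e + b*c)*(b*c - a*e)/(8*b^2*e))*(y t)^2
      + (b/2)*(y t + (a/b)*z t)^2 + (a*(b*c - a*e)/(4*b*e))*(z t)^2 := by
    intro t; rw [hVVdef]; unfold quadF; field_simp; ring
  have hcY : 0 < (a*e + b*c)*(b*c - a*e)/(8*b^2*e) :=
    div_pos (mul_pos (by positivity) hD) (by positivity)
  have hcZ : 0 < a*(b*c - a*e)/(4*b*e) := div_pos (mul_pos ha hD) (by positivity)
  have hVpos : ∀ t, 0 ≤ VV t := by
    intro t
    rw [hVsos t]
    have n1 : 0 ≤ (e/2)*(x t + (a*e + b*c)/(2*b*e)*y t)^2 := by positivity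
    have n2 : 0 ≤ ((a*e + b*c)*(b*c - a*e)/(8*b^2*e))*(y t)^2 :=
      mul_nonneg hcY.le (sq_nonneg _)
    have n3 : 0 ≤ (b/2)*(y t + (a/b)*z t)^2 := by positivity
    have n4 : 0 ≤ (a*(b*c - a*e)/(4*b*e))*(z t)^2 := mul_nonneg hcZ.le (sq_nonneg _)
    linarith
  have hVy : ∀ t, ((a*e + b*c)*(b*c - a*e)/(8*b^2*e))*(y t)^2 ≤ VV t := by
    intro t
    rw [hVsos t]
    have n1 : 0 ≤ (e/2)*(x t + (a*e + b*c)/(2*b*e)*y t)^2 := by positivity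
    have n3 : 0 ≤ (b/2)*(y t + (a/b)*z t)^2 := by positivity
    have n4 : 0 ≤ (a*(b*c - a*e)/(4*b*e))*(z t)^2 := mul_nonneg hcZ.le (sq_nonneg _)
    linarith
  have hVz : ∀ t, (a*(b*c - a*e)/(4*b*e))*(z t)^2 ≤ VV t := by
    intro t
    rw [hVsos t]
    have n1 : 0 ≤ (e/2)*(x t + (a*e + b*c)/(2*b*e)*y t)^2 := by positivity
    have n2 : 0 ≤ ((a*e + b*c)*(b*c - a*e)/(8*b^2*e))*(y t)^2 :=
      mul_nonneg hcY.le (sq_nonneg _)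
    have n3 : 0 ≤ (b/2)*(y t + (a/b)*z t)^2 := by positivity
    linarith
  -- uniform bounds on y, z, x for t ≥ 0
  set My := VV 0 / ((a*e + b*c)*(b*c - a*e)/(8*b^2*e)) with hMydef
  set Mz := VV 0 / (a*(b*c - a*e)/(4*b*e)) with hMzdef
  have hMy : ∀ t, 0 ≤ t → (y t)^2 ≤ My := by
    intro t ht
    rw [hMydef, le_div_iff₀ hcY, mul_comm]
    linarith [hVy t, hVVanti ht]
  have hMz : ∀ t, 0 ≤ t → (z t)^2 ≤ Mz := by
    intro t ht
    rw [hMzdef, le_div_iff₀ hcZ, mul_comm]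
    linarith [hVz t, hVVanti ht]
  have hK1 : (0:ℝ) < c*(b*c - a*e) + e*b^2 := by
    have := mul_pos hc hD
    nlinarith [mul_pos he (pow_pos hb 2)]
  set Mx := (3*(c*(b*c - a*e) + e*b^2)*(EE 0) + (6*b^4*c^2 + 3*a*b^4*e)*My
      + (6*a^2*(b*c - a*e)^2 + 3*a*b^4*e)*Mz) / (c*(b*c - a*e) + e*b^2)^2 with hMxdef
  have hMx : ∀ t, 0 ≤ t → (x t)^2 ≤ Mx := by
    intro t ht
    rw [hMxdef, le_div_iff₀ (by positivity), mul_comm]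
    have h1 : (c*(b*c - a*e) + e*b^2) * (x t)^2 + (2*b^2*c) * (x t * y t)
        + (2*a*(b*c - a*e)) * (x t * z t) + (b^3 + a^2*e) * (y t)^2
        + (2*a*b^2) * (y t * z t) + (a^2*b) * (z t)^2 ≤ EE 0 := by
      have h := hEEanti ht
      rw [hEEexp t] at h
      exact h
    exact xbound a b c e (EE 0) My Mz (x t) (y t) (z t) ha hb hc he hD h1
      (hMy t ht) (hMz t ht)
  -- FTC value of the integral of x² on [0,T]
  have h2eD : (0:ℝ) < 2*e*(b*c - a*e) := by positivity
  have hIxval : ∀ T, ∫ u in (0:ℝ)..T, (x u)^2 = (EE 0 - EE T)/(2*e*(b*c - a*e)) := by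
    intro T
    have h := ftc_all EE _ HEE cEd 0 T
    rw [intervalIntegral.integral_const_mul] at h
    rw [eq_div_iff (ne_of_gt h2eD)]
    linarith
  -- |EE| ≤ CE * WW
  set CE := (c*(b*c - a*e) + e*b^2) + 2*b^2*c + 2*a*(b*c - a*e) + (b^3 + a^2*e)
      + 2*a*b^2 + a^2*b with hCEdef
  have hCE0 : 0 ≤ CE := by
    rw [hCEdef]
    nlinarith [hK1, mul_nonneg (mul_nonneg (by norm_num : (0:ℝ) ≤ 2) ha.le) hD.le,
      mul_pos hb hc, mul_pos ha hb]
  have hEEabs : ∀ t, |EE t| ≤ CE * WW t := by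
    intro t
    rw [hEEexp t, hWWeq t, hCEdef]
    exact quad_abs_bound _ _ _ _ _ _ _ _ _ hK1.le (by positivity)
      (mul_nonneg (by positivity) hD.le) (by positivity) (by positivity) (by positivity)
  have hWWle : ∀ t, 0 ≤ t → WW t ≤ Mx + My + Mz := by
    intro t ht
    rw [hWWeq t]
    have := hMx t ht; have := hMy t ht; have := hMz t ht
    linarith
  -- integrability of x², y², z² on (0,∞)
  have hnorm : ∀ (f : ℝ → ℝ), (∀ u, 0 ≤ f u) → ∀ s t : ℝ,
      (∫ u in s..t, ‖f u‖) = ∫ u in s..t, f u := by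
    intro f hf s t
    congr 1
    funext u
    rw [Real.norm_eq_abs, abs_of_nonneg (hf u)]
  have hIx : IntegrableOn (fun t => (x t)^2) (Ioi (0:ℝ)) := by
    apply integrableOn_Ioi_of_intervalIntegral_norm_bounded
      ((EE 0 + CE*(Mx + My + Mz))/(2*e*(b*c - a*e))) 0
      (fun i : ℝ => ((cx.pow 2).integrableOn_Ioc)) (tendsto_id (α := ℝ))
    filter_upwards [eventually_ge_atTop (0:ℝ)] with T hT
    simp only [id_eq, Pi.pow_apply]
    rw [hnorm _ (fun u => sq_nonneg _), hIxval T]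
    have h1 : -(CE * WW T) ≤ EE T := (abs_le.1 (hEEabs T)).1
    have h2 : CE * WW T ≤ CE * (Mx + My + Mz) :=
      mul_le_mul_of_nonneg_left (hWWle T hT) hCE0
    exact (div_le_div_iff_of_pos_right h2eD).2 (by linarith)
  -- integrability of y² and z²
  have hVval : ∀ T, (∫ u in (0:ℝ)..T, ((b*c - a*e)/(2*b) * (y u)^2
      + (b*c - a*e)/(2*e) * (z u)^2)) = VV 0 - VV T := by
    intro T
    have h := ftc_all VV _ HVV cVd 0 T
    rw [intervalIntegral.integral_neg] at h
    linarith
  have hsplit : ∀ T, (∫ u in (0:ℝ)..T, ((b*c - a*e)/(2*b) * (y u)^2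
      + (b*c - a*e)/(2*e) * (z u)^2))
      = (∫ u in (0:ℝ)..T, (b*c - a*e)/(2*b) * (y u)^2)
        + ∫ u in (0:ℝ)..T, (b*c - a*e)/(2*e) * (z u)^2 := by
    intro T
    exact intervalIntegral.integral_add
      ((by fun_prop : Continuous fun u => (b*c - a*e)/(2*b) * (y u)^2).intervalIntegrable _ _)
      ((by fun_prop : Continuous fun u => (b*c - a*e)/(2*e) * (z u)^2).intervalIntegrable _ _)
  have hDb : (0:ℝ) < (b*c - a*e)/(2*b) := div_pos hD (by linarith)
  have hDe : (0:ℝ) < (b*c - a*e)/(2*e) := div_pos hD (by linarith)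
  have hIyval : ∀ T, 0 ≤ T → (∫ u in (0:ℝ)..T, (y u)^2) ≤ VV 0/((b*c - a*e)/(2*b)) := by
    intro T hT
    rw [le_div_iff₀ hDb, mul_comm]
    have h3 : 0 ≤ ∫ u in (0:ℝ)..T, (b*c - a*e)/(2*e) * (z u)^2 :=
      intervalIntegral.integral_nonneg hT (fun u _ => mul_nonneg hDe.le (sq_nonneg _))
    have h4 : (∫ u in (0:ℝ)..T, (b*c - a*e)/(2*b) * (y u)^2)
        = (b*c - a*e)/(2*b) * ∫ u in (0:ℝ)..T, (y u)^2 :=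
      intervalIntegral.integral_const_mul _ _
    have h5 := hVpos T
    have h6 := hVval T
    have h7 := hsplit T
    linarith
  have hIzval : ∀ T, 0 ≤ T → (∫ u in (0:ℝ)..T, (z u)^2) ≤ VV 0/((b*c - a*e)/(2*e)) := by
    intro T hT
    rw [le_div_iff₀ hDe, mul_comm]
    have h3 : 0 ≤ ∫ u in (0:ℝ)..T, (b*c - a*e)/(2*b) * (y u)^2 :=
      intervalIntegral.integral_nonneg hT (fun u _ => mul_nonneg hDb.le (sq_nonneg _))
    have h4 : (∫ u in (0:ℝ)..T, (b*c - a*e)/(2*e) * (z u)^2)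
        = (b*c - a*e)/(2*e) * ∫ u in (0:ℝ)..T, (z u)^2 :=
      intervalIntegral.integral_const_mul _ _
    have h5 := hVpos T
    have h6 := hVval T
    have h7 := hsplit T
    linarith
  have hIy : IntegrableOn (fun t => (y t)^2) (Ioi (0:ℝ)) := by
    apply integrableOn_Ioi_of_intervalIntegral_norm_bounded
      (VV 0/((b*c - a*e)/(2*b))) 0
      (fun i : ℝ => ((cy.pow 2).integrableOn_Ioc)) (tendsto_id (α := ℝ))
    filter_upwards [eventually_ge_atTop (0:ℝ)] with T hT
    simp only [id_eq, Pi.pow_apply]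
    rw [hnorm _ (fun u => sq_nonneg _)]
    exact hIyval T hT
  have hIz : IntegrableOn (fun t => (z t)^2) (Ioi (0:ℝ)) := by
    apply integrableOn_Ioi_of_intervalIntegral_norm_bounded
      (VV 0/((b*c - a*e)/(2*e))) 0
      (fun i : ℝ => ((cz.pow 2).integrableOn_Ioc)) (tendsto_id (α := ℝ))
    filter_upwards [eventually_ge_atTop (0:ℝ)] with T hT
    simp only [id_eq, Pi.pow_apply]
    rw [hnorm _ (fun u => sq_nonneg _)]
    exact hIzval T hT
  have hIW : IntegrableOn WW (Ioi (0:ℝ)) := by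
    have hfun : WW = fun t => (x t)^2 + (y t)^2 + (z t)^2 := funext hWWeq
    rw [hfun]
    exact (hIx.add hIy).add hIz
  -- tail integrals of WW tend to 0
  have hJ0 : Tendsto (fun s : ℝ => ∫ t in s..(s+1), WW t) atTop (𝓝 0) := by
    have l1 : Tendsto (fun s : ℝ => ∫ t in (0:ℝ)..s, WW t) atTop
        (𝓝 (∫ t in Ioi (0:ℝ), WW t)) :=
      intervalIntegral_tendsto_integral_Ioi 0 hIW (tendsto_id (α := ℝ))
    have l2 : Tendsto (fun s : ℝ => ∫ t in (0:ℝ)..(s+1), WW t) atTop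
        (𝓝 (∫ t in Ioi (0:ℝ), WW t)) :=
      intervalIntegral_tendsto_integral_Ioi 0 hIW
        (tendsto_atTop_add_const_right atTop 1 (tendsto_id (α := ℝ)))
    have l3 := l2.sub l1
    rw [sub_self] at l3
    apply l3.congr
    intro s
    exact (intervalIntegral.integral_interval_sub_left
      (cWW.intervalIntegrable (μ := volume) 0 (s+1))
      (cWW.intervalIntegrable (μ := volume) 0 s))
  -- Gronwall-type lower bound: WW t * exp(K t) is monotone
  set K := 2*(a+b+c+e)/a with hKdef
  have hK0 : 0 ≤ K := by positivity
  have hWWnonneg : ∀ t, 0 ≤ WW t := fun t => by rw [hWWeq t]; positivity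
  have hWdK : ∀ t, 0 ≤ (2*(x t * y t) + 2*(y t * z t)
      - 2*(z t)*(b * z t + c * y t + e * x t)/a) + K * WW t := by
    intro t
    have haWd : a * (2*(x t * y t) + 2*(y t * z t)
        - 2*(z t)*(b * z t + c * y t + e * x t)/a)
        = 2*a*(x t * y t) + 2*a*(y t * z t) - 2*(z t)*(b * z t + c * y t + e * x t) := by
      field_simp
    have key : 0 ≤ 2*(a+b+c+e) * WW t + a * (2*(x t * y t) + 2*(y t * z t)
        - 2*(z t)*(b * z t + c * y t + e * x t)/a) := by
      rw [haWd, hWWeq t]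
      nlinarith [mul_nonneg ha.le (sq_nonneg (x t + y t)),
        mul_nonneg ha.le (sq_nonneg (y t + z t)),
        mul_nonneg hc.le (sq_nonneg (y t - z t)),
        mul_nonneg he.le (sq_nonneg (x t - z t)),
        mul_nonneg ha.le (sq_nonneg (x t)), mul_nonneg ha.le (sq_nonneg (y t)),
        mul_nonneg ha.le (sq_nonneg (z t)),
        mul_nonneg hb.le (sq_nonneg (x t)), mul_nonneg hb.le (sq_nonneg (y t)),
        mul_nonneg hb.le (sq_nonneg (z t)),
        mul_nonneg hc.le (sq_nonneg (x t)), mul_nonneg hc.le (sq_nonneg (y t)),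
        mul_nonneg hc.le (sq_nonneg (z t)),
        mul_nonneg he.le (sq_nonneg (x t)), mul_nonneg he.le (sq_nonneg (y t)),
        mul_nonneg he.le (sq_nonneg (z t))]
    have heq : ((2*(a+b+c+e)) * WW t + a * (2*(x t * y t) + 2*(y t * z t)
        - 2*(z t)*(b * z t + c * y t + e * x t)/a))/a
        = (2*(x t * y t) + 2*(y t * z t)
          - 2*(z t)*(b * z t + c * y t + e * x t)/a) + K * WW t := by
      rw [hKdef]
      field_simp
      ring
    have hdiv := div_nonneg key ha.le
    rw [heq] at hdiv
    exact hdiv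
  have Hg : ∀ t, HasDerivAt (fun u => WW u * Real.exp (K*u))
      (((2*(x t * y t) + 2*(y t * z t) - 2*(z t)*(b * z t + c * y t + e * x t)/a)
        + K * WW t) * Real.exp (K*t)) t := by
    intro t
    have hexp : HasDerivAt (fun u : ℝ => Real.exp (K*u)) (Real.exp (K*t) * (K*1)) t :=
      ((hasDerivAt_id t).const_mul K).exp
    have := (HWW t).mul hexp
    exact this.congr_deriv (by ring)
  have gmono : Monotone (fun u => WW u * Real.exp (K*u)) :=
    monotone_of_deriv _ _ Hg
      (by fun_prop)
      (fun t => mul_nonneg (hWdK t) (Real.exp_nonneg _))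
  have hWle : ∀ s t : ℝ, s ≤ t → t ≤ s+1 → WW s ≤ Real.exp K * WW t := by
    intro s t hst hts
    have h1 : WW s * Real.exp (K*s) ≤ WW t * Real.exp (K*t) := gmono hst
    have h2 : Real.exp (K*t) ≤ Real.exp (K*s) * Real.exp K := by
      rw [← Real.exp_add]
      apply Real.exp_le_exp.2
      nlinarith
    have h3 : WW s * Real.exp (K*s) ≤ (Real.exp K * WW t) * Real.exp (K*s) := by
      calc WW s * Real.exp (K*s) ≤ WW t * Real.exp (K*t) := h1
        _ ≤ WW t * (Real.exp (K*s) * Real.exp K) :=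
          mul_le_mul_of_nonneg_left h2 (hWWnonneg t)
        _ = (Real.exp K * WW t) * Real.exp (K*s) := by ring
    exact le_of_mul_le_mul_right h3 (Real.exp_pos _)
  have hWJ : ∀ s : ℝ, WW s ≤ Real.exp K * ∫ t in s..(s+1), WW t := by
    intro s
    have h1 : (∫ _t in s..(s+1), WW s / Real.exp K) ≤ ∫ t in s..(s+1), WW t := by
      apply intervalIntegral.integral_mono_on (by linarith)
        (intervalIntegrable_const) (cWW.intervalIntegrable _ _)
      intro u hu
      rw [div_le_iff₀ (Real.exp_pos K), mul_comm]
      exact hWle s u hu.1 hu.2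
    have h2 : (∫ _t in s..(s+1), WW s / Real.exp K) = WW s / Real.exp K := by
      rw [intervalIntegral.integral_const]
      simp
    rw [h2] at h1
    rw [← div_le_iff₀' (Real.exp_pos K)]
    exact h1
  have hWW0 : Tendsto WW atTop (𝓝 0) := by
    apply squeeze_zero hWWnonneg hWJ
    have := hJ0.const_mul (Real.exp K)
    simpa using this
  have hEE0 : Tendsto EE atTop (𝓝 0) :=
    squeeze_zero_norm (a := fun t => CE * WW t)
      (fun t => by rw [Real.norm_eq_abs]; exact hEEabs t)
      (by simpa using hWW0.const_mul CE)
  -- conclusion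
  have lim1 : Tendsto (fun T => ∫ u in (0:ℝ)..T, (x u)^2) atTop
      (𝓝 ((EE 0 - 0)/(2*e*(b*c - a*e)))) := by
    have h := (tendsto_const_nhds (x := EE 0) (f := atTop (α := ℝ))).sub hEE0
    have h2 := h.div_const (2*e*(b*c - a*e))
    exact h2.congr (fun T => (hIxval T).symm)
  have lim2 : Tendsto (fun T => ∫ u in (0:ℝ)..T, (x u)^2) atTop
      (𝓝 (∫ t in Ioi (0:ℝ), (x t)^2)) :=
    intervalIntegral_tendsto_integral_Ioi 0 hIx (tendsto_id (α := ℝ))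
  have hfinal := tendsto_nhds_unique lim2 lim1
  refine ⟨hIx, ?_⟩
  rw [hfinal, sub_zero]
  congr 1
  rw [hEEexp 0]
  ring

/-- L2 norm squared of the impulse response of the closed-loop third-order
turbine-generator transfer function
`h(s) = (τs + 1)/(mτ s³ + (m + dτ)s² + (d + r⁻¹ + λτ)s + λ)`. -/
theorem stmt7 (m d τ rinv lam : ℝ) (hm : 0 < m) (hd : 0 < d) (hτ : 0 < τ)
    (hr : 0 < rinv) (hlam : 0 < lam)
    (h : ℝ → ℝ) (hsmooth : ContDiff ℝ (⊤ : ℕ∞) h)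
    (hode : ∀ t, m * τ * deriv (deriv (deriv h)) t + (m + d * τ) * deriv (deriv h) t
        + (d + rinv + lam * τ) * deriv h t + lam * h t = 0)
    (h0 : h 0 = 0) (h0' : deriv h 0 = 1 / m)
    (h0'' : deriv (deriv h) 0 = -(d / m ^ 2)) :
    ∫ t in Ioi (0 : ℝ), (h t) ^ 2
      = (m + τ * (lam * τ + d)) /
          (2 * lam * (m * (rinv + d) + τ * d * (rinv + lam * τ + d))) := by
  have hRH : (m*τ) * lam < (m + d*τ) * (d + rinv + lam*τ) := by
    nlinarith [mul_pos hm hd, mul_pos hm hr, mul_pos (mul_pos hd hd) hτ,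
      mul_pos (mul_pos hd hr) hτ, mul_pos (mul_pos hd hlam) (mul_pos hτ hτ)]
  have key := aux_l2 (m*τ) (m + d*τ) (d + rinv + lam*τ) lam
    (by positivity) (by positivity) (by positivity) hlam hRH h hsmooth hode
  rw [key.2, h0, h0', h0'']
  have hm0 : m ≠ 0 := hm.ne'
  have hDD : (m + d*τ) * (d + rinv + lam*τ) - (m*τ)*lam ≠ 0 := by nlinarith
  have hden : 2 * lam * (m * (rinv + d) + τ * d * (rinv + lam * τ + d)) ≠ 0 := by positivity
  rw [div_eq_div_iff (mul_ne_zero (mul_ne_zero two_ne_zero hlam.ne') hDD) hden]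
  field_simp
  ring
end

section
/- Let d, τ, r^{-1}, λ > 0 be fixed and define N(m) = (m + τ(λτ + d)) / (2λ[m(r^{-1} + d) + τ d(r^{-1} + λτ + d)]) for m > 0. Then N is strictly decreasing in m, with lim_{m→0⁺} N(m) = (λτ + d)/(2λd(r^{-1} + λτ + d)) and lim_{m→∞} N(m) = 1/(2λ(r^{-1} + d)). -/
/-!
`N(m)` is a ratio of two affine functions of `m` with positive denominator on `m > 0`.
Such a ratio `(a m + b) / (c m + e)` is strictly decreasing exactly when `a e < b c`, which
here reduces to `2 λ² τ² r⁻¹ > 0`; its limits at `0⁺` and `∞` are `b / e` and `a / c`.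
-/

open Filter Topology Set

section AffineRatio

variable {a b c e : ℝ}

theorem strictAntiOn_affine_div_affine (hc : 0 ≤ c) (he : 0 < e) (h : a * e < b * c) :
    StrictAntiOn (fun m : ℝ => (a * m + b) / (c * m + e)) (Ioi 0) := by
  intro x (hx : 0 < x) y (hy : 0 < y) hxy
  have hcx : 0 < c * x + e := by positivity
  have hcy : 0 < c * y + e := by positivity
  rw [div_lt_div_iff₀ hcy hcx]
  nlinarith [mul_pos (sub_pos.2 h) (sub_pos.2 hxy)]

theorem tendsto_affine_div_affine_nhdsGT_zero (he : e ≠ 0) :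
    Tendsto (fun m : ℝ => (a * m + b) / (c * m + e)) (𝓝[>] 0) (𝓝 (b / e)) := by
  have hcont : ContinuousAt (fun m : ℝ => (a * m + b) / (c * m + e)) 0 :=
    ContinuousAt.div (by fun_prop) (by fun_prop) (by simpa using he)
  simpa using hcont.tendsto.mono_left nhdsWithin_le_nhds

theorem tendsto_affine_div_affine_atTop (hc : c ≠ 0) :
    Tendsto (fun m : ℝ => (a * m + b) / (c * m + e)) atTop (𝓝 (a / c)) := by
  have hlim : Tendsto (fun m : ℝ => (a + b * m⁻¹) / (c + e * m⁻¹)) atTop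
      (𝓝 ((a + b * 0) / (c + e * 0))) :=
    ((tendsto_inv_atTop_zero.const_mul b).const_add a).div
      ((tendsto_inv_atTop_zero.const_mul e).const_add c) (by simpa using hc)
  rw [mul_zero, mul_zero, add_zero, add_zero] at hlim
  refine hlim.congr' ?_
  filter_upwards [eventually_gt_atTop 0] with m hm
  rw [← mul_div_mul_right _ _ hm.ne', add_mul, add_mul, inv_mul_cancel_right₀ hm.ne',
    inv_mul_cancel_right₀ hm.ne', mul_comm a, mul_comm c]

end AffineRatio

/-- The squared L2 norm `N(m)` of the closed-loop turbine-generator impulse response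
is strictly decreasing in the inertia `m`, with the stated limits as `m → 0⁺` and
`m → ∞`. -/
theorem stmt8 (d τ rinv lam : ℝ) (hd : 0 < d) (hτ : 0 < τ) (hr : 0 < rinv)
    (hlam : 0 < lam) :
    StrictAntiOn
        (fun m : ℝ => (m + τ * (lam * τ + d)) /
          (2 * lam * (m * (rinv + d) + τ * d * (rinv + lam * τ + d)))) (Ioi 0) ∧
    Tendsto (fun m : ℝ => (m + τ * (lam * τ + d)) /
          (2 * lam * (m * (rinv + d) + τ * d * (rinv + lam * τ + d))))
        (𝓝[>] 0) (𝓝 ((lam * τ + d) / (2 * lam * d * (rinv + lam * τ + d)))) ∧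
    Tendsto (fun m : ℝ => (m + τ * (lam * τ + d)) /
          (2 * lam * (m * (rinv + d) + τ * d * (rinv + lam * τ + d))))
        atTop (𝓝 (1 / (2 * lam * (rinv + d)))) := by
  have hN : (fun m : ℝ => (m + τ * (lam * τ + d)) /
        (2 * lam * (m * (rinv + d) + τ * d * (rinv + lam * τ + d)))) =
      fun m => (1 * m + τ * (lam * τ + d)) /
        (2 * lam * (rinv + d) * m + 2 * lam * (τ * d * (rinv + lam * τ + d))) := by
    funext m
    ring
  have hgap : τ * (lam * τ + d) * (2 * lam * (rinv + d)) -
      1 * (2 * lam * (τ * d * (rinv + lam * τ + d))) = 2 * lam ^ 2 * τ ^ 2 * rinv := by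
    ring
  rw [hN]
  refine ⟨strictAntiOn_affine_div_affine (by positivity) (by positivity) ?_, ?_, ?_⟩
  · have : 0 < 2 * lam ^ 2 * τ ^ 2 * rinv := by positivity
    linarith
  · have hτd : 2 * lam * (τ * d * (rinv + lam * τ + d)) ≠ 0 := by positivity
    convert tendsto_affine_div_affine_nhdsGT_zero (a := 1) (b := τ * (lam * τ + d))
      (c := 2 * lam * (rinv + d)) hτd using 2
    field_simp
  · exact tendsto_affine_div_affine_atTop (by positivity)
end

section
/- Let m, d, τ, r^{-1} > 0 satisfy 4mτr^{-1} > (m − dτ)^2, and define φ(m) ∈ (−π/2, π/2) by tan(φ(m)) = (m − dτ)/sqrt(4mτr^{-1} − (m − dτ)^2). Then dφ/dm = (m + dτ)/(2m sqrt(4r^{-1}mτ − (m − dτ)^2)). -/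
/-!
On the under-damped region `φ` is locally `arctan ∘ g` with `g x = (x - c)/√(a x - (x - c)²)`,
`c = dτ`, `a = 4τr⁻¹`. Writing `Q = a x - (x - c)²`, the quotient rule gives
`g' = a (x + c) / (2 Q √Q)`, and `1 + g² = a x / Q`, so `(arctan ∘ g)' = (x + c) / (2 x √Q)`.
-/

open Set Real Filter Topology

section UnderDamped

variable {a c x : ℝ}

theorem hasDerivAt_div_sqrt_sub_sq (hQ : 0 < a * x - (x - c) ^ 2) :
    HasDerivAt (fun y => (y - c) / √(a * y - (y - c) ^ 2))
      (a * (x + c) / (2 * (a * x - (x - c) ^ 2) * √(a * x - (x - c) ^ 2))) x := by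
  have hnum : HasDerivAt (fun y : ℝ => y - c) 1 x := (hasDerivAt_id x).sub_const c
  have hQ' : HasDerivAt (fun y : ℝ => a * y - (y - c) ^ 2) (a - 2 * (x - c)) x := by
    simpa using ((hasDerivAt_id' x).const_mul a).fun_sub (hnum.fun_pow 2)
  have hs : √(a * x - (x - c) ^ 2) ≠ 0 := (sqrt_pos.mpr hQ).ne'
  refine (hnum.div (hQ'.sqrt hQ.ne') hs).congr_deriv ?_
  have hsq : √(a * x - (x - c) ^ 2) ^ 2 = a * x - (x - c) ^ 2 := sq_sqrt hQ.le
  have hQ0 := hQ.ne'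
  field_simp
  rw [hsq]
  ring

theorem one_add_sq_div_sqrt_sub_sq (hQ : 0 < a * x - (x - c) ^ 2) :
    1 + ((x - c) / √(a * x - (x - c) ^ 2)) ^ 2 = a * x / (a * x - (x - c) ^ 2) := by
  rw [div_pow, sq_sqrt hQ.le, add_div' _ _ _ hQ.ne']
  ring

theorem hasDerivAt_arctan_div_sqrt_sub_sq (hQ : 0 < a * x - (x - c) ^ 2) :
    HasDerivAt (fun y => arctan ((y - c) / √(a * y - (y - c) ^ 2)))
      ((x + c) / (2 * x * √(a * x - (x - c) ^ 2))) x := by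
  convert (hasDerivAt_div_sqrt_sub_sq hQ).arctan using 1
  have hax : 0 < a * x := by nlinarith [sq_nonneg (x - c)]
  have hQ0 := hQ.ne'
  have hs : √(a * x - (x - c) ^ 2) ≠ 0 := (sqrt_pos.mpr hQ).ne'
  have ha : a ≠ 0 := left_ne_zero_of_mul hax.ne'
  have hx : x ≠ 0 := right_ne_zero_of_mul hax.ne'
  rw [one_add_sq_div_sqrt_sub_sq hQ]
  generalize a * x - (x - c) ^ 2 = Q at hQ0 hs ⊢
  field_simp

end UnderDamped

theorem stmt10_general (d τ rinv : ℝ)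
    (φ : ℝ → ℝ)
    (hφ : ∀ x : ℝ, 0 < x → 4 * x * τ * rinv > (x - d * τ) ^ 2 →
        φ x ∈ Ioo (-(π / 2)) (π / 2) ∧
        Real.tan (φ x) = (x - d * τ) / Real.sqrt (4 * x * τ * rinv - (x - d * τ) ^ 2))
    (m : ℝ) (hm : 0 < m) (hud : 4 * m * τ * rinv > (m - d * τ) ^ 2) :
    HasDerivAt φ
      ((m + d * τ) / (2 * m * Real.sqrt (4 * rinv * m * τ - (m - d * τ) ^ 2))) m := by
  have hQ : ∀ x : ℝ, 4 * x * τ * rinv - (x - d * τ) ^ 2 = 4 * τ * rinv * x - (x - d * τ) ^ 2 :=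
    fun x => by ring
  have hQm : 0 < 4 * τ * rinv * m - (m - d * τ) ^ 2 := by linarith [hQ m]
  have hlocal : φ =ᶠ[𝓝 m]
      fun x => arctan ((x - d * τ) / √(4 * τ * rinv * x - (x - d * τ) ^ 2)) := by
    have hQcont : Continuous fun x : ℝ => 4 * τ * rinv * x - (x - d * τ) ^ 2 := by fun_prop
    filter_upwards [eventually_gt_nhds hm,
      hQcont.continuousAt.eventually (eventually_gt_nhds hQm)] with x hx hQx
    obtain ⟨⟨hlo, hhi⟩, htan⟩ := hφ x hx (by linarith [hQ x])
    rw [← arctan_tan hlo hhi, htan, hQ]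
  refine ((hasDerivAt_arctan_div_sqrt_sub_sq hQm).congr_of_eventuallyEq hlocal).congr_deriv ?_
  rw [show 4 * rinv * m * τ = 4 * τ * rinv * m by ring]

/-- Derivative with respect to the inertia `m` of the Nadir phase angle `φ(m)`
defined by `tan(φ(m)) = (m - dτ)/√(4mτr⁻¹ - (m - dτ)²)`. -/
theorem stmt10 (d τ rinv : ℝ) (hd : 0 < d) (hτ : 0 < τ) (hr : 0 < rinv)
    (φ : ℝ → ℝ)
    (hφ : ∀ x : ℝ, 0 < x → 4 * x * τ * rinv > (x - d * τ) ^ 2 →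
        φ x ∈ Ioo (-(π / 2)) (π / 2) ∧
        Real.tan (φ x) = (x - d * τ) / Real.sqrt (4 * x * τ * rinv - (x - d * τ) ^ 2))
    (m : ℝ) (hm : 0 < m) (hud : 4 * m * τ * rinv > (m - d * τ) ^ 2) :
    HasDerivAt φ
      ((m + d * τ) / (2 * m * Real.sqrt (4 * rinv * m * τ - (m - d * τ) ^ 2))) m :=
  stmt10_general d τ rinv φ hφ m hm hud
end

section
/- Let d, τ, r^{-1} > 0 be fixed. On the set of m > 0 where 4mτr^{-1} > (m − dτ)^2, the function m ↦ (1/(d + r^{-1}))(1 + sqrt(τr^{-1}/m) · e^{−(η(m)/ω_d(m))(φ(m) + π/2)}) is strictly decreasing in m, where η/ω_d = (m + dτ)/sqrt(4mτr^{-1} − (m−dτ)^2) and φ(m) ∈ (−π/2, π/2) satisfies sin(φ) = (m − dτ)/(2 sqrt(mτr^{-1})). -/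
open Set Real

/-!
Write `a = d τ`, `b = τ r⁻¹`, `Q = √(4 m b - (m - a)²)` and `Ψ = φ + π / 2 ∈ (0, π)`. The derivative
of the overshoot `√(b / m) · exp (-(m + a) Ψ / Q)` in `m` is the overshoot times
`-2 (a + b) / Q³ · (Q + (m - a) Ψ)`. As `m - a = 2 √(m b) sin φ` and `Q = 2 √(m b) cos φ`, the last
factor is `2 √(m b) (sin Ψ - Ψ cos Ψ)`, which is positive on `(0, π)` because `tan Ψ > Ψ` on
`(0, π / 2)`.
-/

theorem sin_sub_mul_cos_pos {x : ℝ} (h₀ : 0 < x) (hπ : x < π) : 0 < sin x - x * cos x := by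
  rcases le_or_gt (cos x) 0 with hcos | hcos
  · nlinarith [sin_pos_of_pos_of_lt_pi h₀ hπ]
  · have hx : x < π / 2 := by
      by_contra! h
      exact hcos.not_ge (cos_nonpos_of_pi_div_two_le_of_le h (by linarith))
    have htan := lt_tan h₀ hx
    rw [tan_eq_sin_div_cos, lt_div_iff₀ hcos] at htan
    linarith

theorem sqrt_one_sub_sq_add_mul_arcsin_add_pi_div_two_pos {s : ℝ} (h₁ : -1 < s) (h₂ : s < 1) :
    0 < √(1 - s ^ 2) + s * (arcsin s + π / 2) := by
  have h := sin_sub_mul_cos_pos (x := arcsin s + π / 2)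
    (by linarith [neg_pi_div_two_lt_arcsin.2 h₁]) (by linarith [arcsin_lt_pi_div_two.2 h₂])
  rwa [sin_add_pi_div_two, cos_add_pi_div_two, cos_arcsin, sin_arcsin h₁.le h₂.le, mul_neg,
    sub_neg_eq_add, mul_comm] at h

theorem hasDerivAt_sqrt_const_div {b m : ℝ} (hb : 0 < b) (hm : 0 < m) :
    HasDerivAt (fun x => √(b / x)) (-(√(b / m) / (2 * m))) m := by
  have h := ((hasDerivAt_inv hm.ne').const_mul b).sqrt (by positivity)
  simp only [← div_eq_mul_inv] at h
  refine h.congr_deriv ?_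
  have hs : √(b / m) ^ 2 = b / m := sq_sqrt (by positivity)
  field_simp
  rw [hs]
  field_simp

noncomputable def sinPhase (a b m : ℝ) : ℝ := (m - a) / (2 * √(m * b))

noncomputable def sqrtDiscr (a b m : ℝ) : ℝ := √(4 * m * b - (m - a) ^ 2)

/-- With `a = d τ` and `b = τ r⁻¹`, `sinPhase a b m = sin φ`, `(m + a) / sqrtDiscr a b m = η / ω_d`,
and the Nadir is `(1 + nadirOvershoot a b m) / (d + r⁻¹)`. -/
noncomputable def nadirOvershoot (a b m : ℝ) : ℝ :=
  √(b / m) * exp (-((m + a) / sqrtDiscr a b m) * (arcsin (sinPhase a b m) + π / 2))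

def underdamped (a b : ℝ) : Set ℝ := {m | 0 < m ∧ (m - a) ^ 2 < 4 * m * b}

theorem isOpen_underdamped (a b : ℝ) : IsOpen (underdamped a b) :=
  isOpen_Ioi.inter (isOpen_lt (by fun_prop : Continuous fun m : ℝ => (m - a) ^ 2)
    (by fun_prop : Continuous fun m : ℝ => 4 * m * b))

theorem convex_underdamped (a b : ℝ) : Convex ℝ (underdamped a b) := by
  refine OrdConnected.convex ⟨fun x hx y hy z hz => ⟨hx.1.trans_le hz.1, ?_⟩⟩
  -- three-point convexity identity of the quadratic `m ↦ (m - a) ^ 2 - 4 m b`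
  have hid : (y - x) * ((z - a) ^ 2 - 4 * z * b) = (y - z) * ((x - a) ^ 2 - 4 * x * b) +
      (z - x) * ((y - a) ^ 2 - 4 * y * b) - (y - x) * (y - z) * (z - x) := by ring
  rcases hz.1.eq_or_lt with rfl | hxz
  · exact hx.2
  have hneg : (y - x) * ((z - a) ^ 2 - 4 * z * b) < 0 := by
    rw [hid]
    nlinarith [mul_pos (sub_pos.2 hxz) (sub_pos.2 hy.2),
      mul_nonneg (sub_nonneg.2 hz.2) (sub_pos.2 hx.2).le,
      mul_nonneg (mul_nonneg (sub_nonneg.2 (hxz.le.trans hz.2)) (sub_nonneg.2 hz.2))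
        (sub_pos.2 hxz).le]
  linarith [neg_of_mul_neg_right hneg (by linarith [hz.2])]

section
variable {a b m : ℝ}

theorem pos_of_mem_underdamped (hm : m ∈ underdamped a b) : 0 < b := by
  nlinarith [hm.1, hm.2, sq_nonneg (m - a)]

theorem sqrtDiscr_pos (hm : m ∈ underdamped a b) : 0 < sqrtDiscr a b m :=
  sqrt_pos.2 (by linarith [hm.2])

theorem sqrtDiscr_sq (hm : m ∈ underdamped a b) :
    sqrtDiscr a b m ^ 2 = 4 * m * b - (m - a) ^ 2 :=
  sq_sqrt (by linarith [hm.2])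

theorem sqrt_one_sub_sinPhase_sq (hm : m ∈ underdamped a b) :
    √(1 - sinPhase a b m ^ 2) = sqrtDiscr a b m / (2 * √(m * b)) := by
  have hb := pos_of_mem_underdamped hm
  have hP2 : √(m * b) ^ 2 = m * b := sq_sqrt (mul_pos hm.1 hb).le
  have hP : 0 < √(m * b) := sqrt_pos.2 (mul_pos hm.1 hb)
  have hm0 : m ≠ 0 := hm.1.ne'
  rw [← sqrt_sq (div_pos (sqrtDiscr_pos hm) (by positivity)).le, sinPhase]
  congr 1
  rw [div_pow, div_pow, mul_pow, hP2, sqrtDiscr_sq hm]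
  field_simp
  ring

theorem sinPhase_mem_Ioo (hm : m ∈ underdamped a b) : sinPhase a b m ∈ Ioo (-1) 1 := by
  have hb := pos_of_mem_underdamped hm
  have hP : 0 < √(m * b) := sqrt_pos.2 (mul_pos hm.1 hb)
  have hsq : sinPhase a b m ^ 2 < 1 := by
    rw [sinPhase, div_pow, div_lt_one (by positivity), mul_pow, sq_sqrt (mul_pos hm.1 hb).le]
    linarith [hm.2]
  exact abs_lt.1 ((sq_lt_one_iff_abs_lt_one _).1 hsq)

theorem hasDerivAt_sqrtDiscr (hm : m ∈ underdamped a b) :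
    HasDerivAt (sqrtDiscr a b) ((4 * b - 2 * (m - a)) / (2 * sqrtDiscr a b m)) m := by
  have hD : HasDerivAt (fun x => 4 * x * b - (x - a) ^ 2) (4 * b - 2 * (m - a)) m := by
    simpa using (((hasDerivAt_id' m).const_mul 4).mul_const b).fun_sub
      (((hasDerivAt_id' m).sub_const a).fun_pow 2)
  exact hD.sqrt (by linarith [hm.2])

theorem hasDerivAt_add_div_sqrtDiscr (hm : m ∈ underdamped a b) :
    HasDerivAt (fun x => (x + a) / sqrtDiscr a b x)
      (2 * (m - a) * (a + b) / sqrtDiscr a b m ^ 3) m := by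
  have hQ := sqrtDiscr_pos hm
  refine (((hasDerivAt_id' m).add_const a).div (hasDerivAt_sqrtDiscr hm) hQ.ne').congr_deriv ?_
  field_simp
  linear_combination 2 * sqrtDiscr_sq hm

theorem hasDerivAt_sinPhase (hm : m ∈ underdamped a b) :
    HasDerivAt (sinPhase a b) ((m + a) / (4 * m * √(m * b))) m := by
  have hb := pos_of_mem_underdamped hm
  have hP : 0 < √(m * b) := sqrt_pos.2 (mul_pos hm.1 hb)
  have hP2 : √(m * b) ^ 2 = m * b := sq_sqrt (mul_pos hm.1 hb).le
  have hm0 : m ≠ 0 := hm.1.ne'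
  refine (((hasDerivAt_id' m).sub_const a).div
    ((((hasDerivAt_id' m).mul_const b).sqrt (mul_pos hm.1 hb).ne').const_mul 2)
      (by positivity)).congr_deriv ?_
  field_simp
  linear_combination 4 * (m - a) * hP2

theorem hasDerivAt_arcsin_sinPhase (hm : m ∈ underdamped a b) :
    HasDerivAt (fun x => arcsin (sinPhase a b x)) ((m + a) / (2 * m * sqrtDiscr a b m)) m := by
  have hb := pos_of_mem_underdamped hm
  have hP : 0 < √(m * b) := sqrt_pos.2 (mul_pos hm.1 hb)
  have hs := sinPhase_mem_Ioo hm
  refine ((hasDerivAt_arcsin hs.1.ne' hs.2.ne).comp m (hasDerivAt_sinPhase hm)).congr_deriv ?_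
  rw [sqrt_one_sub_sinPhase_sq hm]
  field_simp
  ring

theorem hasDerivAt_nadir_exponent (hm : m ∈ underdamped a b) :
    HasDerivAt (fun x => -((x + a) / sqrtDiscr a b x) * (arcsin (sinPhase a b x) + π / 2))
      (1 / (2 * m) - 2 * (a + b) / sqrtDiscr a b m ^ 3 *
        (sqrtDiscr a b m + (m - a) * (arcsin (sinPhase a b m) + π / 2))) m := by
  have hQ := sqrtDiscr_pos hm
  have hm0 : m ≠ 0 := hm.1.ne'
  refine ((hasDerivAt_add_div_sqrtDiscr hm).fun_neg.mul
    ((hasDerivAt_arcsin_sinPhase hm).add_const _)).congr_deriv ?_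
  field_simp
  linear_combination (-sqrtDiscr a b m) * sqrtDiscr_sq hm

theorem sqrtDiscr_add_mul_arcsin_sinPhase_pos (hm : m ∈ underdamped a b) :
    0 < sqrtDiscr a b m + (m - a) * (arcsin (sinPhase a b m) + π / 2) := by
  have hb := pos_of_mem_underdamped hm
  have hP : 0 < √(m * b) := sqrt_pos.2 (mul_pos hm.1 hb)
  have hs := sinPhase_mem_Ioo hm
  have h := sqrt_one_sub_sq_add_mul_arcsin_add_pi_div_two_pos hs.1 hs.2
  rw [sqrt_one_sub_sinPhase_sq hm] at h
  have hfactor : sqrtDiscr a b m + (m - a) * (arcsin (sinPhase a b m) + π / 2) =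
      2 * √(m * b) * (sqrtDiscr a b m / (2 * √(m * b)) +
        sinPhase a b m * (arcsin (sinPhase a b m) + π / 2)) := by
    rw [sinPhase]
    field_simp
  rw [hfactor]
  exact mul_pos (by positivity) h

theorem hasDerivAt_nadirOvershoot (hm : m ∈ underdamped a b) :
    HasDerivAt (nadirOvershoot a b)
      (-(nadirOvershoot a b m * (2 * (a + b) / sqrtDiscr a b m ^ 3 *
        (sqrtDiscr a b m + (m - a) * (arcsin (sinPhase a b m) + π / 2))))) m := by
  refine ((hasDerivAt_sqrt_const_div (pos_of_mem_underdamped hm) hm.1).mul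
    (hasDerivAt_nadir_exponent hm).exp).congr_deriv ?_
  rw [nadirOvershoot]
  field_simp
  ring

theorem deriv_nadirOvershoot_neg (hm : m ∈ underdamped a b) : deriv (nadirOvershoot a b) m < 0 := by
  have hb := pos_of_mem_underdamped hm
  have hab : 0 < a + b := by nlinarith [hm.1, hm.2, sq_nonneg (m + a)]
  have hQ := sqrtDiscr_pos hm
  have hN : 0 < nadirOvershoot a b m := mul_pos (sqrt_pos.2 (div_pos hb hm.1)) (exp_pos _)
  rw [(hasDerivAt_nadirOvershoot hm).deriv, neg_lt_zero]
  exact mul_pos hN (mul_pos (by positivity) (sqrtDiscr_add_mul_arcsin_sinPhase_pos hm))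

end

theorem strictAntiOn_nadirOvershoot (a b : ℝ) :
    StrictAntiOn (nadirOvershoot a b) (underdamped a b) := by
  refine strictAntiOn_of_deriv_neg (convex_underdamped a b)
    (fun m hm => (hasDerivAt_nadirOvershoot hm).continuousAt.continuousWithinAt) ?_
  rw [(isOpen_underdamped a b).interior_eq]
  exact fun m hm => deriv_nadirOvershoot_neg hm

theorem stmt12_general (d τ rinv : ℝ) (hd : 0 < d) (hr : 0 < rinv) :
    StrictAntiOn
      (fun m : ℝ => (1 / (d + rinv)) *
        (1 + Real.sqrt (τ * rinv / m) *
          Real.exp (-((m + d * τ) / Real.sqrt (4 * m * τ * rinv - (m - d * τ) ^ 2)) *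
            (Real.arcsin ((m - d * τ) / (2 * Real.sqrt (m * τ * rinv))) + π / 2))))
      {m : ℝ | 0 < m ∧ 4 * m * τ * rinv > (m - d * τ) ^ 2} := by
  have hdomain : {m : ℝ | 0 < m ∧ 4 * m * τ * rinv > (m - d * τ) ^ 2} =
      underdamped (d * τ) (τ * rinv) := by
    simp only [underdamped, gt_iff_lt, mul_assoc]
  have hnadir : (fun m : ℝ => (1 / (d + rinv)) *
        (1 + Real.sqrt (τ * rinv / m) *
          Real.exp (-((m + d * τ) / Real.sqrt (4 * m * τ * rinv - (m - d * τ) ^ 2)) *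
            (Real.arcsin ((m - d * τ) / (2 * Real.sqrt (m * τ * rinv))) + π / 2)))) =
      fun m => (1 / (d + rinv)) * (1 + nadirOvershoot (d * τ) (τ * rinv) m) := by
    simp only [nadirOvershoot, sqrtDiscr, sinPhase, mul_assoc]
  rw [hdomain, hnadir]
  exact fun x hx y hy hxy => mul_lt_mul_of_pos_left
    (add_lt_add_right (strictAntiOn_nadirOvershoot _ _ hx hy hxy) 1) (by positivity)

/-- The frequency Nadir of the under-damped third-order turbine-generator model is
strictly decreasing in the inertia `m`. -/
theorem stmt12 (d τ rinv : ℝ) (hd : 0 < d) (hτ : 0 < τ) (hr : 0 < rinv) :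
    StrictAntiOn
      (fun m : ℝ => (1 / (d + rinv)) *
        (1 + Real.sqrt (τ * rinv / m) *
          Real.exp (-((m + d * τ) / Real.sqrt (4 * m * τ * rinv - (m - d * τ) ^ 2)) *
            (Real.arcsin ((m - d * τ) / (2 * Real.sqrt (m * τ * rinv))) + π / 2))))
      {m : ℝ | 0 < m ∧ 4 * m * τ * rinv > (m - d * τ) ^ 2} :=
  stmt12_general d τ rinv hd hr
end

section
/- Let m, d > 0, λ_k, λ_l > 0, and define A_j = [[0, 1], [−λ_j/m, −d/m]] for j ∈ {k, l}, B = [0; −1/m]. Then the unique solution Q of the Sylvester equation A_k Q + Q A_l^T + B B^T = 0 is Q = c · [[1, (λ_k − λ_l)/(2d)], [(λ_l − λ_k)/(2d), (λ_k + λ_l)/(2m)]] where c = 2d/(m(λ_k − λ_l)^2 + 2(λ_k + λ_l)d^2). -/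
/-!
For the companion matrices `!![0, 1; -p, -q]`, `!![0, 1; -p', -q]` the Sylvester equation is a
4 × 4 linear system in the entries of `Q`. Its (0,0) entry makes the off-diagonal part
antisymmetric, the difference and the sum of the off-diagonal entries express `Q 0 1` and `Q 1 1`
through `Q 0 0`, and the (1,1) entry then fixes `Q 0 0`. The determinant of the system is
`(p - p')² + 2q²(p + p')`, positive when both matrices are Hurwitz. The swing dynamics is the case
`p = λ / m`, `q = d / m`, `β = 1 / m²`.
-/

open Matrix

section
variable {K : Type*} [Field K]

theorem companion_sylvester_fin_two (p p' q β a b c e : K) :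
    !![0, 1; -p, -q] * !![a, b; c, e] + !![a, b; c, e] * !![0, 1; -p', -q]ᵀ + !![0, 0; 0, β] =
      !![b + c, e - p' * a - q * b; e - p * a - q * c, β - p * b - p' * c - 2 * q * e] := by
  ext i j
  fin_cases i <;> fin_cases j <;>
    simp only [Fin.zero_eta, Fin.mk_one, Fin.isValue, Matrix.add_apply, mul_apply, transpose_apply,
      of_apply, cons_val', cons_val_fin_one, cons_val_zero, cons_val_one, Fin.sum_univ_two] <;>
    ring

theorem companion_sylvester_system_iff [NeZero (2 : K)] {p p' q β : K} (hq : q ≠ 0)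
    (hD : (p - p') ^ 2 + 2 * q ^ 2 * (p + p') ≠ 0) (a b c e : K) :
    b + c = 0 ∧ e - p' * a - q * b = 0 ∧ e - p * a - q * c = 0 ∧
        β - p * b - p' * c - 2 * q * e = 0 ↔
      a = 2 * q * β / ((p - p') ^ 2 + 2 * q ^ 2 * (p + p')) ∧
        b = 2 * q * β / ((p - p') ^ 2 + 2 * q ^ 2 * (p + p')) * ((p - p') / (2 * q)) ∧
        c = 2 * q * β / ((p - p') ^ 2 + 2 * q ^ 2 * (p + p')) * ((p' - p) / (2 * q)) ∧
        e = 2 * q * β / ((p - p') ^ 2 + 2 * q ^ 2 * (p + p')) * ((p + p') / 2) := by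
  constructor
  · rintro ⟨h00, h01, h10, h11⟩
    have hb : 2 * q * b = (p - p') * a := by linear_combination h10 - h01 + q * h00
    have he : 2 * e = (p + p') * a := by linear_combination h01 + h10 + q * h00
    have ha : a = 2 * q * β / ((p - p') ^ 2 + 2 * q ^ 2 * (p + p')) := by
      rw [eq_div_iff hD]
      linear_combination -2 * q * h11 - 2 * q * p' * h00 - (p - p') * hb - 2 * q ^ 2 * he
    rw [← ha]
    refine ⟨rfl, ?_, ?_, ?_⟩ <;> field_simp
    · linear_combination hb
    · linear_combination 2 * q * h00 - hb
    · linear_combination he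
  · rintro ⟨rfl, rfl, rfl, rfl⟩
    refine ⟨?_, ?_, ?_, ?_⟩ <;> field_simp <;> ring

theorem companion_sylvester_eq_zero_iff [NeZero (2 : K)] {p p' q β : K} (hq : q ≠ 0)
    (hD : (p - p') ^ 2 + 2 * q ^ 2 * (p + p') ≠ 0) (Q : Matrix (Fin 2) (Fin 2) K) :
    !![0, 1; -p, -q] * Q + Q * !![0, 1; -p', -q]ᵀ + !![0, 0; 0, β] = 0 ↔
      Q = (2 * q * β / ((p - p') ^ 2 + 2 * q ^ 2 * (p + p'))) •
        !![1, (p - p') / (2 * q); (p' - p) / (2 * q), (p + p') / 2] := by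
  rw [eta_fin_two Q, companion_sylvester_fin_two]
  simpa [← Matrix.ext_iff, Fin.forall_fin_two, and_assoc] using
    companion_sylvester_system_iff hq hD _ _ _ _

end

/-- The unique solution of the Sylvester equation `A_k Q + Q A_lᵀ + B Bᵀ = 0` for the
closed-loop swing dynamics in controllable canonical form. -/
theorem stmt16 (m d lk ll : ℝ) (hm : 0 < m) (hd : 0 < d) (hlk : 0 < lk) (hll : 0 < ll) :
    let Ak : Matrix (Fin 2) (Fin 2) ℝ := !![0, 1; -lk / m, -d / m]
    let Al : Matrix (Fin 2) (Fin 2) ℝ := !![0, 1; -ll / m, -d / m]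
    let B : Matrix (Fin 2) (Fin 1) ℝ := !![0; -(1 / m)]
    let c : ℝ := 2 * d / (m * (lk - ll) ^ 2 + 2 * (lk + ll) * d ^ 2)
    ∀ Q : Matrix (Fin 2) (Fin 2) ℝ,
      Ak * Q + Q * Alᵀ + B * Bᵀ = 0 ↔
        Q = c • !![1, (lk - ll) / (2 * d); (ll - lk) / (2 * d), (lk + ll) / (2 * m)] := by
  intro Ak Al B c Q
  have hAk : Ak = !![0, 1; -(lk / m), -(d / m)] := by simp only [Ak, neg_div]
  have hAl : Al = !![0, 1; -(ll / m), -(d / m)] := by simp only [Al, neg_div]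
  have hBBT : B * Bᵀ = !![0, 0; 0, 1 / m ^ 2] := by
    ext i j
    fin_cases i <;> fin_cases j <;> simp [B, mul_apply, -cons_mul, sq]
  have hD : (lk / m - ll / m) ^ 2 + 2 * (d / m) ^ 2 * (lk / m + ll / m) ≠ 0 := by positivity
  rw [hAk, hAl, hBBT, companion_sylvester_eq_zero_iff (by positivity) hD]
  congr! 2
  · simp only [c]
    field_simp
  · ext i j
    fin_cases i <;> fin_cases j <;> field_simp
end
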